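/- arXiv:1812.01047 — 8 statements merged into one kernel-verified Lean document; each statement's English description precedes it below -/
import Mathlib

section
/- For all integers n and k with 1 ≤ k ≤ n−1 and k odd, the join of a complete graph on (k−1)/2 vertices with an empty graph on n−(k−1)/2 vertices contains no linear forest with k edges. -/
/-!
Every edge of the join `K_m ∨ E_{n-m}` meets the clique part, which has `m = (k-1)/2` vertices,
and a linear forest has maximum degree 2; so a linear forest inside it has at most
`2m = k - 1` edges.
-/

/-- A linear forest is a graph all of whose connected components are paths or
isolated vertices; equivalently, an acyclic graph of maximum degree at most 2. -/
def IsLinearForest {V : Type*} (F : SimpleGraph V) : Prop :=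
  F.IsAcyclic ∧ ∀ v : V, (F.neighborSet v).ncard ≤ 2

open Finset

namespace SimpleGraph

variable {V : Type*}

theorem isVertexCover_fromRel (p : V → Prop) :
    (fromRel fun u (_ : V) => p u).IsVertexCover {u | p u} :=
  fun _ _ h => h.2

theorem IsVertexCover.card_edgeFinset_le [Fintype V] [DecidableEq V] {G : SimpleGraph V}
    [DecidableRel G.Adj] {s : Finset V} (hs : G.IsVertexCover s) {d : ℕ}
    (hd : ∀ v ∈ s, G.degree v ≤ d) : #G.edgeFinset ≤ d * #s := by
  have hsub : G.edgeFinset ⊆ s.biUnion fun v => G.incidenceFinset v := by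
    intro e he
    induction e with
    | h u v =>
      have huv : G.Adj u v := mem_edgeFinset.1 he
      rcases hs huv with hu | hv
      · exact mem_biUnion.2
          ⟨u, hu, (G.mem_incidenceFinset _ _).2 ⟨huv, Sym2.mem_mk_left u v⟩⟩
      · exact mem_biUnion.2
          ⟨v, hv, (G.mem_incidenceFinset _ _).2 ⟨huv, Sym2.mem_mk_right u v⟩⟩
  calc #G.edgeFinset ≤ ∑ v ∈ s, #(G.incidenceFinset v) :=
        (card_le_card hsub).trans card_biUnion_le
    _ ≤ ∑ _v ∈ s, d :=
        sum_le_sum fun v hv => (G.card_incidenceFinset_eq_degree v).trans_le (hd v hv)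
    _ = d * #s := by rw [sum_const, smul_eq_mul, mul_comm]

end SimpleGraph

theorem stmt_3_general (n k : ℕ) (hk : 1 ≤ k) :
    ¬ ∃ F : SimpleGraph (Fin n),
        F ≤ SimpleGraph.fromRel (fun u _v : Fin n => (u : ℕ) < (k - 1) / 2) ∧
        IsLinearForest F ∧ F.edgeSet.ncard = k := by
  classical
  rintro ⟨F, hle, ⟨-, hdeg⟩, hcard⟩
  set s : Finset (Fin n) := {v | (v : ℕ) < (k - 1) / 2}
  have hcover : F.IsVertexCover s := by
    simpa [s] using (SimpleGraph.isVertexCover_fromRel _).mono hle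
  have hs : #s ≤ (k - 1) / 2 := Fin.card_filter_val_lt.trans_le (min_le_right _ _)
  have hedges := hcover.card_edgeFinset_le (d := 2) fun v _ =>
    (Set.ncard_eq_toFinset_card' _).symm.trans_le (hdeg v)
  rw [← SimpleGraph.coe_edgeFinset, Set.ncard_coe_finset] at hcard
  omega

theorem stmt_3 (n k : ℕ) (hk : 1 ≤ k) (hkn : k ≤ n - 1) (hodd : Odd k) :
    ¬ ∃ F : SimpleGraph (Fin n),
        F ≤ SimpleGraph.fromRel (fun u _v : Fin n => (u : ℕ) < (k - 1) / 2) ∧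
        IsLinearForest F ∧ F.edgeSet.ncard = k :=
  stmt_3_general n k hk
end

section
/- For all integers n and k with 2 ≤ k ≤ n−1 and k even, the join of a complete graph on k/2−1 vertices with the disjoint union of a single edge K_2 and an empty graph on n−k/2−1 vertices contains no linear forest with k edges. -/
/-- `K_{k/2-1} ∨ (K_2 ∪ E_{n-k/2-1})`: the first `k/2 - 1` vertices form a clique joined to
all other vertices, and there is one extra edge between the vertices `k/2 - 1` and `k/2`. -/
theorem stmt_4 (n k : ℕ) (hk : 2 ≤ k) (hkn : k ≤ n - 1) (heven : Even k) :
    ¬ ∃ F : SimpleGraph (Fin n),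
        F ≤ SimpleGraph.fromRel
          (fun u v : Fin n =>
            (u : ℕ) < k / 2 - 1 ∨ ((u : ℕ) = k / 2 - 1 ∧ (v : ℕ) = k / 2)) ∧
        IsLinearForest F ∧ F.edgeSet.ncard = k := by
  classical
  rintro ⟨F, hle, ⟨-, hdeg⟩, hcard⟩
  obtain ⟨c, hc⟩ := heven
  set m := k / 2 - 1 with hm
  have hmn : m + 1 < n := by omega
  have hmn' : m < n := by omega
  set a : Fin n := ⟨m, hmn'⟩ with ha
  set b : Fin n := ⟨m + 1, hmn⟩ with hb
  haveI : DecidableRel F.Adj := Classical.decRel _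
  set S : Finset (Fin n) := Finset.univ.filter (fun v : Fin n => (v : ℕ) < m) with hS
  have hsub : F.edgeFinset ⊆ (S.biUnion (fun v => F.incidenceFinset v)) ∪ {s(a, b)} := by
    intro e he
    rw [SimpleGraph.mem_edgeFinset] at he
    induction e with
    | _ u v =>
      have hadj : F.Adj u v := he
      have := hle hadj
      rw [SimpleGraph.fromRel_adj] at this
      obtain ⟨hne, h | h⟩ := this
      · rcases h with h | ⟨h1, h2⟩
        · apply Finset.mem_union_left
          refine Finset.mem_biUnion.2 ⟨u, by simp [hS, h], ?_⟩
          rw [SimpleGraph.mem_incidenceFinset]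
          exact ⟨he, Sym2.mem_mk_left _ _⟩
        · apply Finset.mem_union_right
          have hu : u = a := by apply Fin.ext; simp [ha]; omega
          have hv : v = b := by apply Fin.ext; simp [hb]; omega
          simp [hu, hv]
      · rcases h with h | ⟨h1, h2⟩
        · apply Finset.mem_union_left
          refine Finset.mem_biUnion.2 ⟨v, by simp [hS, h], ?_⟩
          rw [SimpleGraph.mem_incidenceFinset]
          exact ⟨he, Sym2.mem_mk_right _ _⟩
        · apply Finset.mem_union_right
          have hv : v = a := by apply Fin.ext; simp [ha]; omega
          have hu : u = b := by apply Fin.ext; simp [hb]; omega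
          simp [hu, hv, Sym2.eq_swap]
  have hdeg2 : ∀ v : Fin n, (F.incidenceFinset v).card ≤ 2 := by
    intro v
    rw [SimpleGraph.card_incidenceFinset_eq_degree]
    have := hdeg v
    rwa [Set.ncard_eq_toFinset_card'] at this
  have hScard : S.card ≤ m := by
    have h := Finset.card_le_card_of_injOn (f := fun v : Fin n => (v : ℕ))
      (s := S) (t := Finset.range m)
      (fun v hv => by simp [hS] at hv ⊢; exact hv)
      (fun v₁ _ v₂ _ h => Fin.ext h)
    simpa using h
  have hbound : F.edgeFinset.card ≤ 2 * m + 1 := by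
    calc F.edgeFinset.card ≤ ((S.biUnion (fun v => F.incidenceFinset v)) ∪ {s(a, b)}).card :=
          Finset.card_le_card hsub
      _ ≤ (S.biUnion (fun v => F.incidenceFinset v)).card + 1 := by
          refine (Finset.card_union_le _ _).trans ?_
          simp
      _ ≤ (∑ v ∈ S, (F.incidenceFinset v).card) + 1 :=
          Nat.add_le_add_right (Finset.card_biUnion_le) 1
      _ ≤ (∑ v ∈ S, 2) + 1 :=
          Nat.add_le_add_right (Finset.sum_le_sum (fun v _ => hdeg2 v)) 1
      _ = 2 * S.card + 1 := by rw [Finset.sum_const, smul_eq_mul, Nat.mul_comm]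
      _ ≤ 2 * m + 1 := by omega
  have hk' : F.edgeFinset.card = k := by
    rwa [Set.ncard_eq_toFinset_card'] at hcard
  omega
end

section
/- Let G be a graph on n vertices and let u, v be two nonadjacent vertices of G with d_G(u) + d_G(v) ≥ k. Then G contains no linear forest with k edges if and only if the graph G + uv obtained by adding the edge uv contains no linear forest with k edges. (Equivalently: the property of being L_{n,k}-free is k-stable.) -/
/-!
If `G + uv` has a linear forest with `k` edges but `G` has none, that forest uses `uv`.
Concatenating the paths of a linear forest gives a repetition-free list of vertices in which
every edge joins consecutive entries; conversely, the consecutive pairs of such a list that are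
adjacent in `G` form a linear forest. This yields a list `… u v …` with `k - 1` consecutive
`G`-adjacent pairs, and no list has more. For a neighbour `w` of `u`, reversing the stretch of the
list between `u` and `w` (a 2-opt move) replaces the pairs `uv` and `ww⁺` by `uw` and `vw⁺`, where
`w⁺` is the successor of `w`; by maximality `w⁺` is adjacent to `w` but not to `v`. Symmetrically
every neighbour `w` of `v` has a predecessor `w⁻` adjacent to it. The pairs `(w, w⁺)` and
`(w⁻, w)` are therefore distinct consecutive `G`-adjacent pairs, so `d(u) + d(v) ≤ k - 1`.
-/

namespace SimpleGraph

variable {V : Type*}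

section

variable (G : SimpleGraph V)

open scoped Classical in
noncomputable def adjCount : List V → ℕ
  | a :: b :: l => (if G.Adj a b then 1 else 0) + adjCount (b :: l)
  | _ => 0

def chainGraph : List V → SimpleGraph V
  | a :: b :: l => G ⊓ edge a b ⊔ chainGraph (b :: l)
  | _ => ⊥

end

variable {G : SimpleGraph V}

lemma _root_.List.Nodup.insert_after {P Q : List V} {x y : V} (h : (P ++ y :: Q).Nodup)
    (hx : x ∉ P ++ y :: Q) : (P ++ y :: x :: Q).Nodup := by
  rw [show P ++ y :: x :: Q = (P ++ [y]) ++ x :: Q by simp, List.nodup_middle]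
  simpa using List.nodup_cons.2 ⟨hx, h⟩

@[simp] lemma adjCount_nil : G.adjCount [] = 0 := rfl

@[simp] lemma adjCount_singleton (a : V) : G.adjCount [a] = 0 := rfl

lemma adjCount_cons_cons (a b : V) (l : List V) :
    G.adjCount (a :: b :: l) = G.adjCount [a, b] + G.adjCount (b :: l) := by
  simp [adjCount]

lemma adjCount_pair_of_adj {a b : V} (h : G.Adj a b) : G.adjCount [a, b] = 1 := by
  simp [adjCount, h]

lemma adjCount_pair_of_not_adj {a b : V} (h : ¬ G.Adj a b) : G.adjCount [a, b] = 0 := by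
  simp [adjCount, h]

lemma adjCount_pair_le_one (a b : V) : G.adjCount [a, b] ≤ 1 := by
  by_cases h : G.Adj a b
  · rw [adjCount_pair_of_adj h]
  · rw [adjCount_pair_of_not_adj h]; omega

lemma adjCount_pair_comm (a b : V) : G.adjCount [a, b] = G.adjCount [b, a] := by
  by_cases h : G.Adj a b
  · rw [adjCount_pair_of_adj h, adjCount_pair_of_adj h.symm]
  · rw [adjCount_pair_of_not_adj h, adjCount_pair_of_not_adj (mt G.adj_symm h)]

lemma adjCount_append_cons (l₁ : List V) (b : V) (l₂ : List V) :
    G.adjCount (l₁ ++ b :: l₂) = G.adjCount (l₁ ++ [b]) + G.adjCount (b :: l₂) := by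
  induction l₁ with
  | nil => simp
  | cons a l₁ ih =>
    cases l₁ with
    | nil => exact adjCount_cons_cons a b l₂
    | cons c l₁ =>
      simp only [List.cons_append] at ih ⊢
      rw [adjCount_cons_cons a c, ih, adjCount_cons_cons a c (l₁ ++ [b]), Nat.add_assoc]

lemma adjCount_le_cons (a : V) (l : List V) : G.adjCount l ≤ G.adjCount (a :: l) := by
  cases l with
  | nil => simp
  | cons b l => rw [adjCount_cons_cons]; omega

@[simp] lemma adjCount_reverse (l : List V) : G.adjCount l.reverse = G.adjCount l := by
  induction l with
  | nil => simp
  | cons a l ih =>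
    cases l with
    | nil => simp
    | cons b l =>
      rw [List.reverse_cons, List.reverse_cons, List.append_assoc, List.singleton_append,
        adjCount_append_cons, ← List.reverse_cons, ih, adjCount_cons_cons a,
        adjCount_pair_comm]
      omega

lemma adjCount_le_append_singleton (l : List V) (a : V) :
    G.adjCount l ≤ G.adjCount (l ++ [a]) := by
  rw [← adjCount_reverse (l ++ [a]), List.reverse_append, List.reverse_singleton,
    List.singleton_append, ← G.adjCount_reverse l]
  exact adjCount_le_cons a _

lemma adjCount_add_le_append (l₁ l₂ : List V) :
    G.adjCount l₁ + G.adjCount l₂ ≤ G.adjCount (l₁ ++ l₂) := by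
  cases l₂ with
  | nil => simp
  | cons b l₂ =>
    rw [adjCount_append_cons]
    have := adjCount_le_append_singleton (G := G) l₁ b
    omega

lemma adjCount_mono {H : SimpleGraph V} (h : G ≤ H) (l : List V) :
    G.adjCount l ≤ H.adjCount l := by
  induction l with
  | nil => simp
  | cons a l ih =>
    cases l with
    | nil => simp
    | cons b l =>
      rw [adjCount_cons_cons, H.adjCount_cons_cons]
      by_cases hab : G.Adj a b
      · rw [adjCount_pair_of_adj hab, adjCount_pair_of_adj (h hab)]; omega
      · rw [adjCount_pair_of_not_adj hab]; omega

lemma adjCount_cons_of_forall_not_adj {x : V} (hx : ∀ z, ¬ G.Adj x z) (l : List V) :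
    G.adjCount (x :: l) = G.adjCount l := by
  cases l with
  | nil => rfl
  | cons z l => rw [adjCount_cons_cons x z l, adjCount_pair_of_not_adj (hx z), zero_add]

lemma adjCount_le_erase [DecidableEq V] {x : V} (hx : ∀ z, ¬ G.Adj x z) {t : List V}
    (ht : t.Nodup) : G.adjCount t ≤ G.adjCount (t.erase x) := by
  by_cases hxt : x ∈ t
  · obtain ⟨P, Q, rfl⟩ := List.append_of_mem hxt
    have hxP : x ∉ P := fun h => (List.nodup_append.1 ht).2.2 x h x (by simp) rfl
    rw [List.erase_append_right _ hxP, List.erase_cons_head, adjCount_append_cons,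
      adjCount_cons_of_forall_not_adj hx, ← adjCount_reverse (P ++ [x]), List.reverse_append,
      List.reverse_singleton, List.singleton_append, adjCount_cons_of_forall_not_adj hx,
      adjCount_reverse]
    exact adjCount_add_le_append P Q
  · rw [List.erase_of_not_mem hxt]

lemma exists_adj_of_adjCount_lt_cons {a : V} {l : List V}
    (h : G.adjCount l < G.adjCount (a :: l)) : ∃ b l', l = b :: l' ∧ G.Adj a b := by
  cases l with
  | nil => simp at h
  | cons b l' =>
    refine ⟨b, l', rfl, by_contra fun hab => ?_⟩
    rw [adjCount_cons_cons a b l', adjCount_pair_of_not_adj hab] at h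
    omega

lemma exists_adj_of_adjCount_cons_lt {a b : V} {l : List V}
    (h : G.adjCount (a :: l) < G.adjCount (b :: l)) :
    ∃ y l', l = y :: l' ∧ G.Adj b y ∧ ¬ G.Adj a y := by
  cases l with
  | nil => simp at h
  | cons y l' =>
    rw [adjCount_cons_cons a, adjCount_cons_cons b] at h
    by_cases hby : G.Adj b y
    · refine ⟨y, l', rfl, hby, fun hay => ?_⟩
      rw [adjCount_pair_of_adj hay, adjCount_pair_of_adj hby] at h
      omega
    · rw [adjCount_pair_of_not_adj hby] at h
      omega

lemma adjCount_insert (P Q : List V) (a x : V) :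
    G.adjCount (P ++ a :: x :: Q) + G.adjCount (a :: Q) =
      G.adjCount (P ++ a :: Q) + G.adjCount [a, x] + G.adjCount (x :: Q) := by
  rw [adjCount_append_cons P a (x :: Q), adjCount_append_cons P a Q, adjCount_cons_cons a x Q]
  omega

-- Reversing the segment `b … c` (a 2-opt move) only changes the pairs at its two ends.
lemma adjCount_reverse_segment (P M Q : List V) (a b c : V) :
    G.adjCount (P ++ a :: c :: (M.reverse ++ b :: Q)) + G.adjCount [a, b] + G.adjCount (c :: Q) =
      G.adjCount (P ++ a :: b :: (M ++ c :: Q)) + G.adjCount [a, c] + G.adjCount (b :: Q) := by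
  have hseg : G.adjCount (c :: M.reverse ++ [b]) = G.adjCount (b :: M ++ [c]) := by
    rw [← adjCount_reverse]; simp
  have hc : c :: (M.reverse ++ b :: Q) = (c :: M.reverse) ++ b :: Q := rfl
  have hb : b :: (M ++ c :: Q) = (b :: M) ++ c :: Q := rfl
  rw [adjCount_append_cons P a (c :: _), adjCount_append_cons P a (b :: _),
    adjCount_cons_cons a c (M.reverse ++ b :: Q), adjCount_cons_cons a b (M ++ c :: Q), hc, hb,
    adjCount_append_cons (c :: M.reverse) b, adjCount_append_cons (b :: M) c, hseg]
  omega

lemma chainGraph_le (s : List V) : G.chainGraph s ≤ G := by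
  induction s with
  | nil => exact bot_le
  | cons a l ih =>
    cases l with
    | nil => exact bot_le
    | cons b l => exact sup_le inf_le_left ih

lemma chainGraph_cons_cons_adj {a b x y : V} {l : List V} :
    (G.chainGraph (a :: b :: l)).Adj x y ↔
      G.Adj x y ∧ (x = a ∧ y = b ∨ x = b ∧ y = a) ∨ (G.chainGraph (b :: l)).Adj x y := by
  simp only [chainGraph, sup_adj, inf_adj, edge_adj]
  constructor
  · rintro (⟨h, h', -⟩ | h)
    · exact Or.inl ⟨h, h'⟩
    · exact Or.inr h
  · rintro (⟨h, h'⟩ | h)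
    · exact Or.inl ⟨h, h', h.ne⟩
    · exact Or.inr h

lemma mem_of_chainGraph_adj {s : List V} {x y : V} (h : (G.chainGraph s).Adj x y) : x ∈ s := by
  induction s with
  | nil => exact absurd h (by simp [chainGraph])
  | cons a l ih =>
    cases l with
    | nil => exact absurd h (by simp [chainGraph])
    | cons b l =>
      rcases chainGraph_cons_cons_adj.1 h with ⟨-, ⟨rfl, -⟩ | ⟨rfl, -⟩⟩ | h
      · exact List.mem_cons_self
      · simp
      · exact List.mem_cons_of_mem a (ih h)

lemma chainGraph_adj_head {a y : V} {l : List V} (ha : a ∉ l)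
    (h : (G.chainGraph (a :: l)).Adj a y) : y = l.headD a := by
  cases l with
  | nil => exact absurd h (by simp [chainGraph])
  | cons b l =>
    rcases chainGraph_cons_cons_adj.1 h with ⟨-, ⟨-, rfl⟩ | ⟨rfl, -⟩⟩ | h
    · rfl
    · simp at ha
    · exact absurd (mem_of_chainGraph_adj h) ha

lemma isAcyclic_chainGraph {s : List V} (hs : s.Nodup) : (G.chainGraph s).IsAcyclic := by
  induction s with
  | nil => exact isAcyclic_bot
  | cons a l ih =>
    cases l with
    | nil => exact isAcyclic_bot
    | cons b l =>
      obtain ⟨ha, hs⟩ := List.nodup_cons.1 hs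
      refine ((ih hs).sup_edge_of_not_reachable ?_).anti
        (sup_le (inf_le_right.trans le_sup_right) le_sup_left)
      rintro ⟨p⟩
      cases p with
      | nil => simp at ha
      | cons h _ => exact ha (mem_of_chainGraph_adj h)

lemma ncard_neighborSet_chainGraph_le_two {s : List V} (hs : s.Nodup) (x : V) :
    ((G.chainGraph s).neighborSet x).ncard ≤ 2 := by
  induction s with
  | nil => simp [chainGraph]
  | cons a l ih =>
    cases l with
    | nil => simp [chainGraph]
    | cons b l =>
      obtain ⟨ha, hs⟩ := List.nodup_cons.1 hs
      by_cases hxa : x = a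
      · subst hxa
        exact (Set.ncard_le_ncard (t := {b}) (fun z hz => chainGraph_adj_head ha hz)
          (Set.toFinite _)).trans (by simp)
      by_cases hxb : x = b
      · subst hxb
        refine (Set.ncard_le_ncard (t := {a, l.headD x}) (fun z hz => ?_) (Set.toFinite _)).trans
          ((Set.ncard_insert_le _ _).trans (by simp))
        rcases chainGraph_cons_cons_adj.1 hz with ⟨-, ⟨rfl, -⟩ | ⟨-, rfl⟩⟩ | h
        · exact absurd rfl hxa
        · exact Or.inl rfl
        · exact Or.inr (chainGraph_adj_head (List.nodup_cons.1 hs).1 h)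
      refine (Set.ncard_le_ncard (fun z hz => ?_) ((b :: l).finite_toSet.subset
        fun z hz => mem_of_chainGraph_adj (G := G) (Adj.symm hz))).trans (ih hs)
      rcases chainGraph_cons_cons_adj.1 hz with ⟨-, ⟨rfl, -⟩ | ⟨rfl, -⟩⟩ | h
      · exact absurd rfl hxa
      · exact absurd rfl hxb
      · exact h

theorem isLinearForest_chainGraph {s : List V} (hs : s.Nodup) :
    IsLinearForest (G.chainGraph s) :=
  ⟨isAcyclic_chainGraph hs, ncard_neighborSet_chainGraph_le_two hs⟩

lemma adjCount_le_ncard_edgeSet_chainGraph [Finite V] {s : List V} (hs : s.Nodup) :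
    G.adjCount s ≤ (G.chainGraph s).edgeSet.ncard := by
  induction s with
  | nil => simp
  | cons a l ih =>
    cases l with
    | nil => simp
    | cons b l =>
      obtain ⟨ha, hs⟩ := List.nodup_cons.1 hs
      have hle : G.chainGraph (b :: l) ≤ G.chainGraph (a :: b :: l) := le_sup_right
      rw [adjCount_cons_cons a b l]
      by_cases hab : G.Adj a b
      · have hnew : s(a, b) ∉ (G.chainGraph (b :: l)).edgeSet := fun h =>
          ha (mem_of_chainGraph_adj h)
        have hsub : insert s(a, b) (G.chainGraph (b :: l)).edgeSet ⊆
            (G.chainGraph (a :: b :: l)).edgeSet :=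
          Set.insert_subset (chainGraph_cons_cons_adj.2 (Or.inl ⟨hab, Or.inl ⟨rfl, rfl⟩⟩))
            (edgeSet_mono hle)
        rw [adjCount_pair_of_adj hab]
        have := ih hs
        have := Set.ncard_le_ncard hsub (Set.toFinite _)
        rw [Set.ncard_insert_of_notMem hnew (Set.toFinite _)] at this
        omega
      · rw [adjCount_pair_of_not_adj hab, zero_add]
        exact ih hs |>.trans (Set.ncard_le_ncard (edgeSet_mono hle) (Set.toFinite _))

-- `Set.ncard` is `0` on infinite sets, so the degree bound only passes to subgraphs when `V` is
-- finite.
theorem _root_.IsLinearForest.anti [Finite V] {F F' : SimpleGraph V} (hle : F' ≤ F)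
    (hF : IsLinearForest F) : IsLinearForest F' :=
  ⟨hF.1.anti hle, fun v =>
    (Set.ncard_le_ncard (fun _ h => hle h) (Set.toFinite _)).trans (hF.2 v)⟩

theorem _root_.IsLinearForest.exists_le_ncard_edgeSet_eq [Finite V] {F : SimpleGraph V}
    (hF : IsLinearForest F) {k : ℕ} (hk : k ≤ F.edgeSet.ncard) :
    ∃ F' ≤ F, IsLinearForest F' ∧ F'.edgeSet.ncard = k := by
  obtain ⟨S, hS, rfl⟩ := Set.exists_subset_card_eq hk
  refine ⟨F.deleteEdges (F.edgeSet \ S), deleteEdges_le _, hF.anti (deleteEdges_le _), ?_⟩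
  rw [edgeSet_deleteEdges, Set.sdiff_sdiff_cancel_left hS]

theorem _root_.IsLinearForest.eq_of_adj_of_adj [Finite V] {F : SimpleGraph V}
    (hF : IsLinearForest F) {x y z z' : V} (hx : F.Adj y x) (hz : F.Adj y z)
    (hz' : F.Adj y z') (hzx : z ≠ x) (hz'x : z' ≠ x) : z = z' := by
  by_contra hzz'
  have h3 : ({x, z, z'} : Set V).ncard = 3 :=
    Set.ncard_eq_three.2 ⟨x, z, z', hzx.symm, hz'x.symm, hzz', rfl⟩
  have : ({x, z, z'} : Set V).ncard ≤ 2 :=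
    (Set.ncard_le_ncard (Set.insert_subset hx (Set.insert_subset hz
      (Set.singleton_subset_iff.2 hz'))) (Set.toFinite _)).trans (hF.2 y)
  omega

theorem exists_isLinearForest_of_le_adjCount [Finite V] {s : List V} (hs : s.Nodup) {k : ℕ}
    (hk : k ≤ G.adjCount s) : ∃ F ≤ G, IsLinearForest F ∧ F.edgeSet.ncard = k := by
  obtain ⟨F, hF, hlf, hcard⟩ :=
    (isLinearForest_chainGraph (G := G) hs).exists_le_ncard_edgeSet_eq
      (hk.trans (adjCount_le_ncard_edgeSet_chainGraph hs))
  exact ⟨F, hF.trans (chainGraph_le s), hlf, hcard⟩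

theorem IsAcyclic.exists_adj_forall_adj_eq [Finite V] {F : SimpleGraph V}
    (hF : F.IsAcyclic) (h : F.edgeSet.Nonempty) :
    ∃ x y, F.Adj x y ∧ ∀ z, F.Adj x z → z = y := by
  obtain ⟨e, he⟩ := h
  induction e using Sym2.ind with | _ a b =>
  rw [mem_edgeSet] at he
  have : Nonempty V := ⟨a⟩
  obtain ⟨u, v, p, hp, hmax⟩ := Walk.exists_isPath_forall_isPath_length_le_length F
  have hnil : ¬ p.Nil := by
    rw [← Walk.length_eq_zero_iff]
    have := hmax a b (Adj.toWalk he) (Walk.IsPath.of_adj he)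
    rw [he.length_toWalk] at this
    omega
  refine ⟨u, p.snd, p.adj_snd hnil, fun z hz => hF.eq_snd_of_adj_start hp hz ?_⟩
  by_contra hzp
  have := hmax z v (p.cons hz.symm) (hp.cons hzp)
  simp at this

lemma adjCount_add_one_le_insert {F F' : SimpleGraph V} (hle : F' ≤ F) {x y : V}
    (hyx : F.Adj y x) (P : List V) {Q : List V} (hQ : F'.adjCount (y :: Q) = F'.adjCount Q) :
    F'.adjCount (P ++ y :: Q) + 1 ≤ F.adjCount (P ++ y :: x :: Q) := by
  rw [adjCount_append_cons P y (x :: Q), adjCount_append_cons P y Q, adjCount_cons_cons y x Q,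
    adjCount_pair_of_adj hyx, hQ]
  have := adjCount_mono hle (P ++ [y])
  have := (adjCount_mono hle Q).trans (F.adjCount_le_cons x Q)
  omega

theorem exists_nodup_adjCount_succ_le {F F' : SimpleGraph V} (hle : F' ≤ F)
    {x y : V} (hyx : F.Adj y x) (hy : ∀ z z', F'.Adj y z → F'.Adj y z' → z = z')
    {t : List V} (ht : t.Nodup) (hxt : x ∉ t) :
    ∃ s : List V, s.Nodup ∧ F'.adjCount t + 1 ≤ F.adjCount s := by
  by_cases hyt : y ∈ t
  · obtain ⟨P, Q, rfl⟩ := List.append_of_mem hyt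
    by_cases hQ : F'.adjCount (y :: Q) = F'.adjCount Q
    · exact ⟨_, ht.insert_after hxt, adjCount_add_one_le_insert hle hyx P hQ⟩
    -- `y` is followed by its only `F'`-neighbour, so `x` can go in front of `y` instead
    obtain ⟨z, Q, rfl, hyz⟩ := exists_adj_of_adjCount_lt_cons
      (lt_of_le_of_ne (adjCount_le_cons y Q) (Ne.symm hQ))
    have hP : F'.adjCount (y :: P.reverse) = F'.adjCount P.reverse := by
      by_contra hP
      obtain ⟨z', P', hP', hyz'⟩ := exists_adj_of_adjCount_lt_cons
        (lt_of_le_of_ne (adjCount_le_cons y _) (Ne.symm hP))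
      have hz'P : z' ∈ P := by rw [← List.mem_reverse, hP']; exact List.mem_cons_self
      rw [hy _ _ hyz' hyz] at hz'P
      exact (List.nodup_append.1 ht).2.2 z hz'P z (by simp) rfl
    have hrev : (P ++ y :: z :: Q).reverse = (z :: Q).reverse ++ y :: P.reverse := by simp
    refine ⟨_, (hrev ▸ List.nodup_reverse.2 ht).insert_after ?_,
      adjCount_reverse (P ++ y :: z :: Q) ▸ hrev ▸ adjCount_add_one_le_insert hle hyx _ hP⟩
    simp only [List.mem_reverse, List.mem_append, List.mem_cons] at hxt ⊢
    tauto
  · refine ⟨t ++ [y, x], List.nodup_append.2 ⟨ht, by simp [hyx.ne], ?_⟩, ?_⟩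
    · simp only [List.mem_cons, List.not_mem_nil, or_false]
      rintro a ha b (rfl | rfl) rfl
      · exact hyt ha
      · exact hxt ha
    · rw [adjCount_append_cons t y [x], adjCount_pair_of_adj hyx]
      have := adjCount_mono hle t
      have := F.adjCount_le_append_singleton t y
      omega

theorem _root_.IsLinearForest.exists_nodup_ncard_edgeSet_le_adjCount [Finite V] {F : SimpleGraph V}
    (hF : IsLinearForest F) : ∃ s : List V, s.Nodup ∧ F.edgeSet.ncard ≤ F.adjCount s := by
  classical
  induction hm : F.edgeSet.ncard generalizing F with
  | zero => exact ⟨[], List.nodup_nil, Nat.zero_le _⟩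
  | succ m ih =>
    obtain ⟨x, y, hxy, hleaf⟩ :=
      hF.1.exists_adj_forall_adj_eq (Set.nonempty_of_ncard_ne_zero (by omega))
    set F' := F.deleteEdges {s(x, y)}
    have hle : F' ≤ F := deleteEdges_le _
    have hxy' : s(x, y) ∈ F.edgeSet := hxy
    obtain ⟨t, ht, hmt⟩ := ih (hF.anti hle) (by
      rw [edgeSet_deleteEdges, Set.ncard_sdiff_singleton_of_mem hxy', hm]; rfl)
    have hx (z : V) : ¬ F'.Adj x z := fun hz =>
      (deleteEdges_adj.1 hz).2 (by rw [hleaf z (deleteEdges_adj.1 hz).1]; rfl)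
    have hne {z : V} (hz : F'.Adj y z) : z ≠ x := by
      rintro rfl
      exact (deleteEdges_adj.1 hz).2 (by simp [Sym2.eq_swap])
    obtain ⟨s, hs, hts⟩ := exists_nodup_adjCount_succ_le hle hxy.symm
      (fun z z' hz hz' => hF.eq_of_adj_of_adj hxy.symm (hle hz) (hle hz') (hne hz) (hne hz'))
      (ht.erase x) ht.not_mem_erase
    exact ⟨s, hs, by have := adjCount_le_erase hx ht; omega⟩

lemma adjCount_add_one_le_of_maximal {P M Q : List V} {a b c : V}
    (hs : (P ++ a :: b :: (M ++ c :: Q)).Nodup)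
    (hmax : ∀ t : List V, t.Nodup → G.adjCount t ≤ G.adjCount (P ++ a :: b :: (M ++ c :: Q)))
    (hac : G.Adj a c) : G.adjCount (b :: Q) + 1 ≤ G.adjCount [a, b] + G.adjCount (c :: Q) := by
  classical
  have ht : (P ++ a :: c :: (M.reverse ++ b :: Q)).Nodup :=
    (List.perm_iff_count.2 fun x => by simp [List.count_cons]; omega).nodup_iff.2 hs
  have key := G.adjCount_reverse_segment P M Q a b c
  have := hmax _ ht
  rw [adjCount_pair_of_adj hac] at key
  omega

theorem exists_adj_succ_of_maximal {A B : List V} {u v w : V}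
    (hs : (A ++ u :: v :: B).Nodup)
    (hmax : ∀ t : List V, t.Nodup → G.adjCount t ≤ G.adjCount (A ++ u :: v :: B))
    (huv : ¬ G.Adj u v) (huw : G.Adj u w) :
    ∃ y, ¬ G.Adj v y ∧ [w, y] <:+: A ++ u :: v :: B ∧ G.Adj w y := by
  by_cases hwB : w ∈ B
  · obtain ⟨M, Q, rfl⟩ := List.append_of_mem hwB
    have h := adjCount_add_one_le_of_maximal hs hmax huw
    rw [adjCount_pair_of_not_adj huv] at h
    obtain ⟨y, Q', rfl, hwy, hvy⟩ := exists_adj_of_adjCount_cons_lt (G := G) (a := v) (b := w)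
      (l := Q) (by omega)
    exact ⟨y, hvy, ⟨A ++ u :: v :: M, Q', by simp⟩, hwy⟩
  by_cases hwA : w ∈ A
  · obtain ⟨A', M, rfl⟩ := List.append_of_mem hwA
    cases M with
    | nil => exact ⟨u, fun h => huv h.symm, ⟨A', v :: B, by simp⟩, huw.symm⟩
    | cons y M =>
      simp only [List.append_assoc, List.cons_append] at hs hmax ⊢
      have h := adjCount_add_one_le_of_maximal hs hmax huw.symm
      rw [adjCount_cons_cons u v B, adjCount_cons_cons y v B, adjCount_pair_of_not_adj huv] at h
      have hwy : G.Adj w y := by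
        by_contra hwy
        rw [adjCount_pair_of_not_adj hwy] at h
        omega
      refine ⟨y, fun hvy => ?_, ⟨A', M ++ u :: v :: B, by simp⟩, hwy⟩
      rw [adjCount_pair_of_adj hwy, adjCount_pair_of_adj hvy.symm] at h
      omega
  · have hw : w ∉ A ++ u :: v :: B := by
      simp only [List.mem_append, List.mem_cons, not_or]
      exact ⟨hwA, huw.ne.symm, fun h => huv (h ▸ huw), hwB⟩
    have key := G.adjCount_insert A (v :: B) u w
    have := hmax _ (hs.insert_after hw)
    have := G.adjCount_le_cons w (v :: B)
    rw [adjCount_cons_cons u v B, adjCount_pair_of_not_adj huv, adjCount_pair_of_adj huw] at key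
    omega

lemma ncard_adjPairs_le [Finite V] (s : List V) :
    {p : V × V | [p.1, p.2] <:+: s ∧ G.Adj p.1 p.2}.ncard ≤ G.adjCount s := by
  induction s with
  | nil => simp
  | cons a l ih =>
    cases l with
    | nil => simp [List.infix_cons_iff]
    | cons b l =>
      have hsub : {p : V × V | [p.1, p.2] <:+: a :: b :: l ∧ G.Adj p.1 p.2} ⊆
          {p | p = (a, b) ∧ G.Adj a b} ∪ {p | [p.1, p.2] <:+: b :: l ∧ G.Adj p.1 p.2} := by
        rintro ⟨x, y⟩ ⟨hxy, hadj⟩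
        rcases List.infix_cons_iff.1 hxy with h | h
        · simp only [List.cons_prefix_cons, List.nil_prefix, and_true] at h
          obtain ⟨rfl, rfl⟩ := h
          exact Or.inl ⟨rfl, hadj⟩
        · exact Or.inr ⟨h, hadj⟩
      have hab : {p : V × V | p = (a, b) ∧ G.Adj a b}.ncard = G.adjCount [a, b] := by
        by_cases h : G.Adj a b
        · simp [h, adjCount_pair_of_adj h]
        · simp [h, adjCount_pair_of_not_adj h]
      rw [adjCount_cons_cons a b l, ← hab]
      exact (Set.ncard_le_ncard hsub (Set.toFinite _)).trans
        ((Set.ncard_union_le _ _).trans (Nat.add_le_add_left ih _))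

lemma ncard_add_ncard_le_adjCount [Finite V] {s : List V} {N₁ N₂ : Set V}
    (h₁ : ∀ w ∈ N₁, ∃ y ∉ N₂, [w, y] <:+: s ∧ G.Adj w y)
    (h₂ : ∀ w ∈ N₂, ∃ x, [x, w] <:+: s ∧ G.Adj x w) :
    N₁.ncard + N₂.ncard ≤ G.adjCount s := by
  set E := {p : V × V | [p.1, p.2] <:+: s ∧ G.Adj p.1 p.2}
  have hN₁ : N₁ ⊆ Prod.fst '' {p ∈ E | p.2 ∉ N₂} := fun w hw =>
    let ⟨y, hy, hwy, h⟩ := h₁ w hw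
    ⟨(w, y), ⟨⟨hwy, h⟩, hy⟩, rfl⟩
  have hN₂ : N₂ ⊆ Prod.snd '' {p ∈ E | p.2 ∈ N₂} := fun w hw =>
    let ⟨x, hxw, h⟩ := h₂ w hw
    ⟨(x, w), ⟨⟨hxw, h⟩, hw⟩, rfl⟩
  calc N₁.ncard + N₂.ncard
      ≤ {p ∈ E | p.2 ∉ N₂}.ncard + {p ∈ E | p.2 ∈ N₂}.ncard :=
        Nat.add_le_add
          ((Set.ncard_le_ncard hN₁ (Set.toFinite _)).trans (Set.ncard_image_le (Set.toFinite _)))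
          ((Set.ncard_le_ncard hN₂ (Set.toFinite _)).trans (Set.ncard_image_le (Set.toFinite _)))
    _ = E.ncard := by
        rw [add_comm, ← Set.ncard_union_eq (Set.disjoint_left.2 fun p h₁ h₂ => h₂.2 h₁.2)]
        congr 1
        ext p
        simp only [Set.mem_union, Set.mem_ofPred_eq]
        tauto
    _ ≤ G.adjCount s := ncard_adjPairs_le s

theorem ncard_neighborSet_add_le_adjCount [Finite V] {A B : List V} {u v : V}
    (hs : (A ++ u :: v :: B).Nodup)
    (hmax : ∀ t : List V, t.Nodup → G.adjCount t ≤ G.adjCount (A ++ u :: v :: B))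
    (huv : ¬ G.Adj u v) :
    (G.neighborSet u).ncard + (G.neighborSet v).ncard ≤ G.adjCount (A ++ u :: v :: B) := by
  refine ncard_add_ncard_le_adjCount (fun w huw => exists_adj_succ_of_maximal hs hmax huv huw)
    fun w hvw => ?_
  have hrev : (A ++ u :: v :: B).reverse = B.reverse ++ v :: u :: A.reverse := by simp
  obtain ⟨x, -, hwx, hadj⟩ := exists_adj_succ_of_maximal (hrev ▸ List.nodup_reverse.2 hs)
    (fun t ht => by rw [← hrev, adjCount_reverse]; exact hmax t ht) (fun h => huv h.symm) hvw
  refine ⟨x, ?_, hadj.symm⟩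
  have := hwx.reverse
  rw [← hrev, List.reverse_reverse] at this
  simpa using this

lemma adjCount_sup_edge_le {u v : V} {l : List V} (huv : ¬ [u, v] <:+: l)
    (hvu : ¬ [v, u] <:+: l) : (G ⊔ edge u v).adjCount l ≤ G.adjCount l := by
  induction l with
  | nil => simp
  | cons a l ih =>
    cases l with
    | nil => simp
    | cons b l =>
      rw [adjCount_cons_cons a b l, adjCount_cons_cons a b l]
      have hl := ih (fun h => huv (h.trans (List.suffix_cons a _).isInfix))
        (fun h => hvu (h.trans (List.suffix_cons a _).isInfix))
      by_cases hab : (G ⊔ edge u v).Adj a b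
      · have hG : G.Adj a b := by
          rcases (sup_adj _ _ _ _).1 hab with h | h
          · exact h
          rcases (edge_adj _ _ _ _).1 h with ⟨⟨rfl, rfl⟩ | ⟨rfl, rfl⟩, -⟩
          · exact absurd ⟨[], l, rfl⟩ huv
          · exact absurd ⟨[], l, rfl⟩ hvu
        rw [adjCount_pair_of_adj hab, adjCount_pair_of_adj hG]
        omega
      · rw [adjCount_pair_of_not_adj hab]
        omega

lemma adjCount_sup_edge_le_add_one {u v : V} {A B : List V} (hs : (A ++ u :: v :: B).Nodup) :
    (G ⊔ edge u v).adjCount (A ++ u :: v :: B) ≤ G.adjCount (A ++ u :: v :: B) + 1 := by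
  have hdisj :=
    List.disjoint_of_nodup_append (l₁ := A ++ [u]) (l₂ := v :: B) (by simpa using hs)
  have hv : v ∉ A ++ [u] := fun h => hdisj h List.mem_cons_self
  have hu : u ∉ v :: B := fun h => hdisj (by simp) h
  have h₁ : (G ⊔ edge u v).adjCount (A ++ [u]) ≤ G.adjCount (A ++ [u]) :=
    adjCount_sup_edge_le (fun h => hv (h.subset (by simp))) (fun h => hv (h.subset (by simp)))
  have h₂ : (G ⊔ edge u v).adjCount (v :: B) ≤ G.adjCount (v :: B) :=
    adjCount_sup_edge_le (fun h => hu (h.subset (by simp))) (fun h => hu (h.subset (by simp)))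
  rw [adjCount_append_cons A u (v :: B), adjCount_append_cons A u (v :: B),
    adjCount_cons_cons u v B, adjCount_cons_cons u v B]
  have := (G ⊔ edge u v).adjCount_pair_le_one u v
  omega

lemma exists_nodup_append_cons_cons_of_adjCount_lt {u v : V} {s : List V} (hs : s.Nodup)
    (h : G.adjCount s < (G ⊔ edge u v).adjCount s) :
    ∃ A B, (A ++ u :: v :: B).Nodup ∧
      (G ⊔ edge u v).adjCount (A ++ u :: v :: B) = (G ⊔ edge u v).adjCount s := by
  by_cases huv : [u, v] <:+: s
  · obtain ⟨A, B, rfl⟩ := huv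
    exact ⟨A, B, by simpa using hs, by simp⟩
  by_cases hvu : [v, u] <:+: s
  · obtain ⟨A, B, rfl⟩ := hvu
    have hrev : (A ++ [v, u] ++ B).reverse = B.reverse ++ u :: v :: A.reverse := by simp
    exact ⟨B.reverse, A.reverse, hrev ▸ List.nodup_reverse.2 hs,
      by rw [← hrev, adjCount_reverse]⟩
  exact absurd (adjCount_sup_edge_le huv hvu) (not_le.2 h)

end SimpleGraph

open SimpleGraph

theorem stmt_6_general (n k : ℕ) (G : SimpleGraph (Fin n)) (u v : Fin n)
    (hadj : ¬ G.Adj u v)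
    (hdeg : k ≤ (G.neighborSet u).ncard + (G.neighborSet v).ncard) :
    (¬ ∃ F : SimpleGraph (Fin n), F ≤ G ∧ IsLinearForest F ∧ F.edgeSet.ncard = k) ↔
    (¬ ∃ F : SimpleGraph (Fin n), F ≤ G ⊔ SimpleGraph.fromEdgeSet {s(u, v)} ∧
        IsLinearForest F ∧ F.edgeSet.ncard = k) := by
  refine ⟨fun hG ⟨F, hle, hF, hk⟩ => ?_,
    fun h ⟨F, hle, hF, hk⟩ => h ⟨F, hle.trans le_sup_left, hF, hk⟩⟩
  have hlt (t : List (Fin n)) (ht : t.Nodup) : G.adjCount t < k :=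
    not_le.1 fun h => hG (exists_isLinearForest_of_le_adjCount ht h)
  obtain ⟨s, hs, hks⟩ := hF.exists_nodup_ncard_edgeSet_le_adjCount
  replace hks : k ≤ (G ⊔ edge u v).adjCount s := hk ▸ hks.trans (adjCount_mono hle s)
  obtain ⟨A, B, hAB, hAB_eq⟩ :=
    exists_nodup_append_cons_cons_of_adjCount_lt hs ((hlt s hs).trans_le hks)
  have hsup := adjCount_sup_edge_le_add_one (G := G) hAB
  have hbound := ncard_neighborSet_add_le_adjCount hAB
    (fun t ht => by have := hlt t ht; omega) hadj
  have := hlt _ hAB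
  omega

theorem stmt_6 (n k : ℕ) (G : SimpleGraph (Fin n)) (u v : Fin n)
    (hne : u ≠ v) (hadj : ¬ G.Adj u v)
    (hdeg : k ≤ (G.neighborSet u).ncard + (G.neighborSet v).ncard) :
    (¬ ∃ F : SimpleGraph (Fin n), F ≤ G ∧ IsLinearForest F ∧ F.edgeSet.ncard = k) ↔
    (¬ ∃ F : SimpleGraph (Fin n), F ≤ G ⊔ SimpleGraph.fromEdgeSet {s(u, v)} ∧
        IsLinearForest F ∧ F.edgeSet.ncard = k) :=
  stmt_6_general n k G u v hadj hdeg
end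

section
/- Let G be a graph on n vertices with matching number ν(G) ≤ k. Then e(G) ≤ max{ C(2k+1, 2), C(n,2) − C(n−k, 2) }. -/
/-!
Shifting. For vertices `i < j`, the UV-compression that replaces `j` by `i` in every edge where
the result is not already an edge keeps the number of edges and cannot create larger matchings:
a matching of the compressed family becomes a matching of the original one after swapping `i`
and `j`. A compression strictly lowers the total rank of the edges, so an edge family of minimal
rank with the same size and matching number is shifted.

For a shifted family with least vertex `m` and greatest vertex `b` on `n ≥ 2k + 2` vertices,
either `mb` is an edge, so `m` is adjacent to every vertex and deleting `m` lowers the matching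
number (a matching of size `k` of the rest misses a vertex, which could be matched to `m`), or
`b` is isolated. Induction on `n` with `f(n - 1, k - 1) + (n - 1) ≤ f(n, k)` and
`f(n - 1, k) ≤ f(n, k)` for the bound `f` finishes the proof.
-/

open Finset UV FinsetFamily

theorem Nat.add_choose_two (a b : ℕ) : (a + b).choose 2 = a.choose 2 + a * b + b.choose 2 := by
  rw [Nat.add_choose_eq]
  simp [Finset.Nat.sum_antidiagonal_succ]
  ring

theorem Nat.succ_choose_two (n : ℕ) : (n + 1).choose 2 = n.choose 2 + n := by
  rw [Nat.choose_succ_succ', Nat.choose_one_right, add_comm]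

theorem Nat.choose_two_sub_choose_two_succ (n k : ℕ) :
    (n + 1).choose 2 - (n + 1 - (k + 1)).choose 2 = n.choose 2 - (n - k).choose 2 + n := by
  have := Nat.choose_le_choose 2 (n.sub_le k)
  rw [Nat.add_sub_add_right, Nat.succ_choose_two]
  omega

theorem Nat.choose_two_le_choose_two_sub_choose_two {n k : ℕ} (h : 4 * k + 4 ≤ n) :
    (2 * k + 1).choose 2 ≤ n.choose 2 - (n - k).choose 2 := by
  obtain ⟨d, rfl⟩ : ∃ d, n = d + k := ⟨n - k, by omega⟩
  have h₁ : (2 * k + 1).choose 2 = k.choose 2 + k * (k + 1) + (k.choose 2 + k) := by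
    rw [show 2 * k + 1 = k + (k + 1) by ring, Nat.add_choose_two, Nat.succ_choose_two]
  have h₂ : k.choose 2 ≤ k * k := (Nat.choose_le_pow k 2).trans (by rw [sq])
  rw [h₁, Nat.add_sub_cancel, add_comm d k, Nat.add_choose_two k d, Nat.add_sub_cancel]
  nlinarith

def erdosGallaiBound (n k : ℕ) : ℕ :=
  max ((2 * k + 1).choose 2) (n.choose 2 - (n - k).choose 2)

theorem erdosGallaiBound_le_succ (n k : ℕ) :
    erdosGallaiBound n k ≤ erdosGallaiBound (n + 1) k := by
  have h₁ : (n + 1 - k).choose 2 ≤ (n - k + 1).choose 2 := Nat.choose_le_choose 2 (by omega)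
  have h₂ : (n - k).choose 2 ≤ n.choose 2 := Nat.choose_le_choose 2 (by omega)
  rw [Nat.succ_choose_two] at h₁
  unfold erdosGallaiBound
  rw [Nat.succ_choose_two n]
  omega

theorem erdosGallaiBound_add_le (n k : ℕ) :
    erdosGallaiBound n k + n ≤ erdosGallaiBound (n + 1) (k + 1) := by
  have h : (2 * (k + 1) + 1).choose 2 = (2 * k + 1).choose 2 + (4 * k + 3) := by
    rw [show 2 * (k + 1) + 1 = 2 * k + 1 + 1 + 1 by ring, Nat.succ_choose_two,
      Nat.succ_choose_two]
    ring
  unfold erdosGallaiBound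
  rw [Nat.choose_two_sub_choose_two_succ, h]
  rcases le_or_gt n (4 * k + 3) with hn | hn
  · omega
  · have := Nat.choose_two_le_choose_two_sub_choose_two (k := k) hn
    omega

theorem UV.sum_compression_lt {β : Type*} [GeneralizedBooleanAlgebra β]
    [DecidableRel (@Disjoint β _ _)] [DecidableLE β] [DecidableEq β] {u v : β} {s : Finset β}
    (w : β → ℕ) (hw : ∀ a, compress u v a ≠ a → w (compress u v a) < w a)
    (h : ∃ a ∈ s, compress u v a ∉ s) :
    ∑ a ∈ 𝓒 u v s, w a < ∑ a ∈ s, w a := by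
  rw [compression, sum_union compress_disjoint, filter_image, sum_image compress_injOn,
    ← sum_filter_add_sum_filter_not s (fun a ↦ compress u v a ∈ s)]
  refine Nat.add_lt_add_left (sum_lt_sum_of_nonempty ?_ fun a ha ↦ hw a ?_) _
  · obtain ⟨a, ha, hna⟩ := h
    exact ⟨a, mem_filter.2 ⟨ha, hna⟩⟩
  · rw [mem_filter] at ha
    exact fun h ↦ ha.2 (h.symm ▸ ha.1)

section Matching

variable {α : Type*} {V : Finset α} {F : Finset (Finset α)} {k : ℕ}

def MatchingNumberLE (F : Finset (Finset α)) (k : ℕ) : Prop :=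
  ∀ M ⊆ F, (M : Set (Finset α)).PairwiseDisjoint id → #M ≤ k

theorem MatchingNumberLE.one_le_of_mem (hk : MatchingNumberLE F k) {A : Finset α} (hA : A ∈ F) :
    1 ≤ k := by
  simpa using hk {A} (singleton_subset_iff.2 hA) (by simp)

theorem card_le_erdosGallaiBound_of_card_le (hF : F ⊆ V.powersetCard 2) (hV : #V ≤ 2 * k + 1) :
    #F ≤ erdosGallaiBound #V k :=
  calc #F ≤ #(V.powersetCard 2) := card_le_card hF
    _ ≤ (2 * k + 1).choose 2 := by rw [card_powersetCard]; exact Nat.choose_le_choose 2 hV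
    _ ≤ _ := le_max_left _ _

variable [DecidableEq α]

theorem UV.compress_singleton_of_notMem_of_mem {i j : α} {A : Finset α} (hi : i ∉ A)
    (hj : j ∈ A) : compress {i} {j} A = insert i (A.erase j) := by
  rw [compress_of_disjoint_of_le (disjoint_singleton_left.2 hi) (singleton_subset_iff.2 hj)]
  ext x
  simp only [sup_eq_union, mem_sdiff, mem_union, mem_singleton, mem_insert, mem_erase]
  grind

theorem UV.notMem_and_mem_of_compress_ne {i j : α} {A : Finset α} (h : compress {i} {j} A ≠ A) :
    i ∉ A ∧ j ∈ A := by
  unfold compress at h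
  split_ifs at h with hc
  · exact ⟨disjoint_singleton_left.1 hc.1, singleton_subset_iff.1 hc.2⟩
  · exact absurd rfl h

theorem Finset.map_swap_of_mem_of_notMem {i j : α} {D : Finset α} (hi : i ∈ D) (hj : j ∉ D) :
    D.map (Equiv.swap i j).toEmbedding = (D ⊔ {j}) \ {i} := by
  ext x
  rw [mem_map_equiv, Equiv.symm_swap]
  simp only [sup_eq_union, mem_sdiff, mem_union, mem_singleton]
  rcases eq_or_ne x i with rfl | hxi
  · simp [Equiv.swap_apply_left, hj]
  rcases eq_or_ne x j with rfl | hxj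
  · simp [Equiv.swap_apply_right, hi, hxi]
  · simp [Equiv.swap_apply_of_ne_of_ne hxi hxj, hxi, hxj]

theorem Finset.map_swap_of_notMem_of_notMem {i j : α} {D : Finset α} (hi : i ∉ D)
    (hj : j ∉ D) : D.map (Equiv.swap i j).toEmbedding = D := by
  ext x
  rw [mem_map_equiv, Equiv.symm_swap]
  rcases eq_or_ne x i with rfl | hxi
  · simp [Equiv.swap_apply_left, hi, hj]
  rcases eq_or_ne x j with rfl | hxj
  · simp [Equiv.swap_apply_right, hi, hj]
  · rw [Equiv.swap_apply_of_ne_of_ne hxi hxj]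

theorem Finset.exists_eq_pair_of_card_eq_two {A : Finset α} {x : α}
    (hA : #A = 2) (hx : x ∈ A) : ∃ y, y ≠ x ∧ A = {x, y} := by
  obtain ⟨a, b, hab, rfl⟩ := card_eq_two.1 hA
  simp only [mem_insert, mem_singleton] at hx
  rcases hx with rfl | rfl
  exacts [⟨b, hab.symm, rfl⟩, ⟨a, hab, pair_comm _ _⟩]

theorem MatchingNumberLE.compression (hF : MatchingNumberLE F k) (i j : α) :
    MatchingNumberLE (𝓒 {i} {j} F) k := by
  intro M hM hdisj
  by_cases hMF : M ⊆ F
  · exact hF M hMF hdisj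
  obtain ⟨B, hBM, hBF⟩ := not_subset.1 hMF
  have hiB : i ∈ B := singleton_subset_iff.1 (le_of_mem_compression_of_notMem (hM hBM) hBF)
  have hjB : j ∉ B :=
    disjoint_singleton_left.1 (disjoint_of_mem_compression_of_notMem (hM hBM) hBF)
  -- the only member of `M` outside `F` is `B`; swapping `i` and `j` moves `M` into `F`
  have hswap : ∀ D ∈ M, D.map (Equiv.swap i j).toEmbedding ∈ F := by
    intro D hD
    by_cases hiD : i ∈ D
    · obtain rfl : D = B := hdisj.elim hD hBM (not_disjoint_iff.2 ⟨i, hiD, hiB⟩)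
      rw [map_swap_of_mem_of_notMem hiD hjB]
      exact sup_sdiff_mem_of_mem_compression_of_notMem (hM hD) hBF
    by_cases hjD : j ∈ D
    · rw [Equiv.swap_comm, map_swap_of_mem_of_notMem hjD hiD]
      exact sup_sdiff_mem_of_mem_compression (hM hD) (singleton_subset_iff.2 hjD)
        (disjoint_singleton_left.2 hiD)
    · rw [map_swap_of_notMem_of_notMem hiD hjD]
      by_contra hDF
      exact hiD (singleton_subset_iff.1 (le_of_mem_compression_of_notMem (hM hD) hDF))
  let σ : Finset α ↪ Finset α := ⟨_, map_injective (Equiv.swap i j).toEmbedding⟩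
  rw [← card_map σ]
  refine hF _ (fun _ hσD ↦ ?_) ?_
  · obtain ⟨D, hD, rfl⟩ := mem_map.1 hσD
    exact hswap D hD
  · rw [coe_map]
    exact Set.Pairwise.image fun D hD E hE hDE ↦ (disjoint_map _).2 (hdisj hD hE hDE)

theorem MatchingNumberLE.filter_notMem (hk : MatchingNumberLE F (k + 1))
    (hF : F ⊆ V.powersetCard 2) (hV : 2 * k + 4 ≤ #V) {m : α}
    (hstar : ∀ v ∈ V, v ≠ m → {m, v} ∈ F) : MatchingNumberLE {A ∈ F | m ∉ A} k := by
  intro M hM hdisj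
  have hMF : M ⊆ F := hM.trans (filter_subset _ _)
  by_contra! hlt
  have hcover : #(insert m (M.biUnion id)) < #V :=
    calc #(insert m (M.biUnion id)) ≤ ∑ A ∈ M, #A + 1 :=
          (card_insert_le _ _).trans (Nat.add_le_add_right card_biUnion_le 1)
      _ = #M * 2 + 1 := by rw [sum_const_nat fun A hA ↦ (mem_powersetCard.1 (hF (hMF hA))).2]
      _ < #V := by have := hk M hMF hdisj; omega
  obtain ⟨v, hv, hvM⟩ := exists_mem_notMem_of_card_lt_card hcover
  simp only [mem_insert, mem_biUnion, id, not_or, not_exists, not_and] at hvM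
  have hmM : {m, v} ∉ M := fun h ↦ (mem_filter.1 (hM h)).2 (mem_insert_self _ _)
  have hdisj' : (↑(insert {m, v} M) : Set (Finset α)).PairwiseDisjoint id := by
    rw [coe_insert]
    refine hdisj.insert fun A hA _ ↦ ?_
    rw [id, id, disjoint_left]
    intro x hx hxA
    simp only [mem_insert, mem_singleton] at hx
    rcases hx with rfl | rfl
    exacts [(mem_filter.1 (hM hA)).2 hxA, hvM.2 A hA hxA]
  have := hk _ (insert_subset (hstar v hv hvM.1) hMF) hdisj'
  rw [card_insert_of_notMem hmM] at this
  omega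

theorem card_filter_mem_le (hF : F ⊆ V.powersetCard 2) (m : α) :
    #{A ∈ F | m ∈ A} ≤ #(V.erase m) := by
  calc #{A ∈ F | m ∈ A} ≤ #((V.erase m).powersetCard 1) := by
        refine card_le_card_of_injOn (fun A : Finset α ↦ A.erase m) (fun A hA ↦ ?_)
          fun A hA B hB hAB ↦ ?_
        · obtain ⟨hA, hmA⟩ := mem_filter.1 hA
          obtain ⟨hAV, hA2⟩ := mem_powersetCard.1 (hF hA)
          refine mem_powersetCard.2 ⟨erase_subset_erase m hAV, ?_⟩
          rw [card_erase_of_mem hmA, hA2]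
        · rw [← insert_erase (mem_filter.1 hA).2, ← insert_erase (mem_filter.1 hB).2]
          exact congrArg (insert m) hAB
    _ = #(V.erase m) := by rw [card_powersetCard, Nat.choose_one_right]

end Matching

section Shifting

variable {α : Type*} [LinearOrder α] {V : Finset α} {F : Finset (Finset α)} {k r : ℕ}

def IsShifted (V : Finset α) (F : Finset (Finset α)) : Prop :=
  ∀ A ∈ F, ∀ i ∈ V, ∀ j ∈ A, i < j → i ∉ A → insert i (A.erase j) ∈ F

def shiftWeight (V : Finset α) (F : Finset (Finset α)) : ℕ :=
  ∑ A ∈ F, ∑ x ∈ A, #{y ∈ V | y < x}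

theorem shiftWeight_compression_lt {i j : α} (hi : i ∈ V) (hij : i < j)
    (h : ∃ A ∈ F, compress {i} {j} A ∉ F) :
    shiftWeight V (𝓒 {i} {j} F) < shiftWeight V F := by
  refine sum_compression_lt _ (fun A hA ↦ ?_) h
  obtain ⟨hiA, hjA⟩ := notMem_and_mem_of_compress_ne hA
  have hrank : #{y ∈ V | y < i} < #{y ∈ V | y < j} :=
    card_lt_card <| (ssubset_iff_of_subset fun y hy ↦ by grind).2 ⟨i, by simp [hi, hij]⟩
  rw [compress_singleton_of_notMem_of_mem hiA hjA, sum_insert fun h ↦ hiA (mem_of_mem_erase h),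
    ← sum_erase_add A _ hjA]
  omega

theorem compression_subset_powersetCard {i j : α} (hi : i ∈ V) (hF : F ⊆ V.powersetCard r) :
    𝓒 {i} {j} F ⊆ V.powersetCard r := by
  intro A hA
  rw [mem_compression] at hA
  obtain ⟨hA, -⟩ | ⟨-, B, hB, rfl⟩ := hA
  · exact hF hA
  obtain ⟨hBV, hBr⟩ := mem_powersetCard.1 (hF hB)
  refine mem_powersetCard.2 ⟨?_, by rw [card_compress (by simp), hBr]⟩
  by_cases h : compress {i} {j} B = B
  · rwa [h]
  obtain ⟨hiB, hjB⟩ := notMem_and_mem_of_compress_ne h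
  rw [compress_singleton_of_notMem_of_mem hiB hjB]
  exact insert_subset hi ((erase_subset _ _).trans hBV)

theorem exists_isShifted (hF : F ⊆ V.powersetCard r) (hk : MatchingNumberLE F k) :
    ∃ F' ⊆ V.powersetCard r, #F' = #F ∧ MatchingNumberLE F' k ∧ IsShifted V F' := by
  classical
  let C := (V.powersetCard r).powerset.filter fun F' ↦ #F' = #F ∧ MatchingNumberLE F' k
  obtain ⟨F', hF'C, hmin⟩ := exists_min_image C (shiftWeight V) ⟨F, by simp [C, hF, hk]⟩
  simp only [C, mem_filter, mem_powerset] at hF'C hmin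
  obtain ⟨hF'V, hcard, hk'⟩ := hF'C
  refine ⟨F', hF'V, hcard, hk', fun A hA i hi j hjA hij hiA ↦ by_contra fun hnot ↦ ?_⟩
  have hlt := shiftWeight_compression_lt hi hij
    ⟨A, hA, by rwa [compress_singleton_of_notMem_of_mem hiA hjA]⟩
  exact hlt.not_ge <| hmin _ ⟨compression_subset_powersetCard hi hF'V,
    by rw [card_compression, hcard], hk'.compression i j⟩

theorem IsShifted.mono (hs : IsShifted V F) {W : Finset α} (hW : W ⊆ V) : IsShifted W F :=
  fun A hA i hi ↦ hs A hA i (hW hi)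

theorem IsShifted.filter_notMem (hs : IsShifted V F) (m : α) :
    IsShifted (V.erase m) {A ∈ F | m ∉ A} := by
  intro A hA i hi j hj hij hiA
  rw [mem_filter] at hA ⊢
  refine ⟨hs A hA.1 i (mem_of_mem_erase hi) j hj hij hiA, ?_⟩
  rw [mem_insert, not_or]
  exact ⟨(ne_of_mem_erase hi).symm, fun h ↦ hA.2 (mem_of_mem_erase h)⟩

theorem IsShifted.pair_mem (hs : IsShifted V F) {a b v : α} (hab : {a, b} ∈ F) (hv : v ∈ V)
    (hav : a ≠ v) (hvb : v < b) (hne : a ≠ b) : {a, v} ∈ F := by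
  have := hs _ hab v hv b (by simp) hvb (by simp [hav.symm, hvb.ne])
  convert this using 1
  ext x
  simp only [mem_insert, mem_erase, mem_singleton]
  grind

theorem IsShifted.subset_powersetCard_erase (hs : IsShifted V F) (hF : F ⊆ V.powersetCard 2)
    {m b : α} (hm : IsLeast (V : Set α) m) (hmb : m ≠ b) (hnot : {m, b} ∉ F) :
    F ⊆ (V.erase b).powersetCard 2 := by
  intro A hA
  obtain ⟨hAV, hA2⟩ := mem_powersetCard.1 (hF hA)
  refine mem_powersetCard.2 ⟨fun x hx ↦ mem_erase.2 ⟨?_, hAV hx⟩, hA2⟩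
  rintro rfl
  obtain ⟨a, hax, rfl⟩ := exists_eq_pair_of_card_eq_two hA2 hx
  have haV : a ∈ V := hAV (by simp)
  rcases eq_or_ne m a with rfl | hma
  · exact hnot (by rwa [pair_comm])
  · exact hnot (pair_comm x m ▸ hs.pair_mem hA hm.1 hmb.symm
      (lt_of_le_of_ne (hm.2 haV) hma) hax.symm)

theorem IsShifted.card_le_erdosGallaiBound (hF : F ⊆ V.powersetCard 2) (hs : IsShifted V F)
    (hk : MatchingNumberLE F k) : #F ≤ erdosGallaiBound #V k := by
  induction hV : #V generalizing V F k with
  | zero => exact hV ▸ card_le_erdosGallaiBound_of_card_le hF (by omega)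
  | succ n ih =>
    rcases le_or_gt (n + 1) (2 * k + 1) with hsmall | hlarge
    · exact hV ▸ card_le_erdosGallaiBound_of_card_le hF (by omega)
    have hne : V.Nonempty := card_pos.1 (by omega)
    have hm := isLeast_min' V hne
    have hmb : V.min' hne < V.max' hne := min'_lt_max'_of_card V (by omega)
    set m := V.min' hne
    set b := V.max' hne
    by_cases hmbF : {m, b} ∈ F
    · obtain ⟨k, rfl⟩ := Nat.exists_eq_add_of_le' (hk.one_le_of_mem hmbF)
      have hstar : ∀ v ∈ V, v ≠ m → {m, v} ∈ F := fun v hv hvm ↦ by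
        rcases (le_max' V v hv).eq_or_lt with hvb | hvb
        · rw [hvb]
          exact hmbF
        · exact hs.pair_mem hmbF hv (Ne.symm hvm) hvb hmb.ne
      have hF' : {A ∈ F | m ∉ A} ⊆ (V.erase m).powersetCard 2 := fun A hA ↦ by
        obtain ⟨hA, hmA⟩ := mem_filter.1 hA
        obtain ⟨hAV, hA2⟩ := mem_powersetCard.1 (hF hA)
        refine mem_powersetCard.2 ⟨fun x hx ↦ mem_erase.2 ⟨?_, hAV hx⟩, hA2⟩
        rintro rfl
        exact hmA hx
      have hVm : #(V.erase m) = n := by rw [card_erase_of_mem hm.1, hV]; rfl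
      have hrest := ih hF' (hs.filter_notMem m) (hk.filter_notMem hF (by omega) hstar) hVm
      have hstarCard := card_filter_mem_le hF m
      calc #F = #{A ∈ F | m ∈ A} + #{A ∈ F | m ∉ A} :=
            (card_filter_add_card_filter_not _).symm
        _ ≤ erdosGallaiBound n k + n := by omega
        _ ≤ _ := erdosGallaiBound_add_le n k
    · have hVb : #(V.erase b) = n := by rw [card_erase_of_mem (max'_mem V hne), hV]; rfl
      exact (ih (hs.subset_powersetCard_erase hF hm hmb.ne hmbF) (hs.mono (erase_subset b V)) hk
        hVb).trans (erdosGallaiBound_le_succ n k)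

theorem card_le_erdosGallaiBound (hF : F ⊆ V.powersetCard 2) (hk : MatchingNumberLE F k) :
    #F ≤ erdosGallaiBound #V k := by
  obtain ⟨F', hF'V, hcard, hk', hs⟩ := exists_isShifted hF hk
  exact hcard ▸ hs.card_le_erdosGallaiBound hF'V hk'

end Shifting

theorem Sym2.toFinset_injective {α : Type*} [DecidableEq α] :
    Function.Injective (Sym2.toFinset : Sym2 α → Finset α) := fun z w h ↦
  Sym2.ext fun x ↦ by rw [← Sym2.mem_toFinset, h, Sym2.mem_toFinset]

def Sym2.toFinsetEmbedding {α : Type*} [DecidableEq α] : Sym2 α ↪ Finset α :=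
  ⟨Sym2.toFinset, Sym2.toFinset_injective⟩

namespace SimpleGraph

variable {V : Type*} {G : SimpleGraph V}

theorem exists_isMatching_edgeSet_eq {S : Set (Sym2 V)} (hS : S ⊆ G.edgeSet)
    (hdisj : ∀ e ∈ S, ∀ f ∈ S, ∀ v ∈ e, v ∈ f → e = f) :
    ∃ M : G.Subgraph, M.IsMatching ∧ M.edgeSet = S := by
  refine ⟨{ verts := {v | ∃ e ∈ S, v ∈ e}
            Adj := fun v w ↦ s(v, w) ∈ S
            adj_sub := fun h ↦ hS h
            edge_vert := fun h ↦ ⟨_, h, Sym2.mem_mk_left _ _⟩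
            symm := ⟨fun v w h ↦ by rwa [Sym2.eq_swap]⟩ }, ?_, ?_⟩
  · rintro v ⟨e, he, hve⟩
    obtain ⟨w, rfl⟩ := Sym2.mem_iff_exists.1 hve
    exact ⟨w, he, fun w' hw' ↦
      Sym2.congr_right.1 (hdisj _ hw' _ he v (Sym2.mem_mk_left _ _) (Sym2.mem_mk_left _ _))⟩
  · ext e
    induction e using Sym2.ind
    exact Subgraph.mem_edgeSet

variable [DecidableEq V] [Fintype G.edgeSet]

theorem matchingNumberLE_edgeFinset_map {k : ℕ}
    (hk : ∀ M : G.Subgraph, M.IsMatching → M.edgeSet.ncard ≤ k) :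
    MatchingNumberLE (G.edgeFinset.map Sym2.toFinsetEmbedding) k := by
  intro M hM hdisj
  have hrange : (M : Set (Finset V)) ⊆ Set.range Sym2.toFinset := fun A hA ↦ by
    obtain ⟨e, -, he⟩ := mem_map.1 (hM hA)
    exact ⟨e, he⟩
  obtain ⟨N, hN, hNM⟩ := exists_isMatching_edgeSet_eq (G := G) (S := Sym2.toFinset ⁻¹' M)
    (fun e he ↦ by
      obtain ⟨e', he', hee'⟩ := mem_map.1 (hM he)
      rw [← Sym2.toFinset_injective hee']
      exact mem_edgeFinset.1 he')
    (fun e he f hf v hve hvf ↦ Sym2.toFinset_injective <| hdisj.elim he hf <|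
      not_disjoint_iff.2 ⟨v, Sym2.mem_toFinset.2 hve, Sym2.mem_toFinset.2 hvf⟩)
  have := hk N hN
  rwa [hNM, Set.ncard_preimage_of_injective_subset_range Sym2.toFinset_injective hrange,
    Set.ncard_coe_finset] at this

theorem edgeFinset_map_subset_powersetCard [Fintype V] :
    G.edgeFinset.map Sym2.toFinsetEmbedding ⊆ (univ : Finset V).powersetCard 2 := by
  intro A hA
  obtain ⟨e, he, rfl⟩ := mem_map.1 hA
  exact mem_powersetCard.2 ⟨subset_univ _,
    Sym2.card_toFinset_of_not_isDiag e (G.not_isDiag_of_mem_edgeSet (mem_edgeFinset.1 he))⟩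

end SimpleGraph

theorem stmt_8 (n k : ℕ) (G : SimpleGraph (Fin n))
    (hnu : ∀ M : G.Subgraph, M.IsMatching → M.edgeSet.ncard ≤ k) :
    G.edgeSet.ncard ≤
      max (Nat.choose (2 * k + 1) 2) (Nat.choose n 2 - Nat.choose (n - k) 2) := by
  classical
  have := card_le_erdosGallaiBound G.edgeFinset_map_subset_powersetCard
    (G.matchingNumberLE_edgeFinset_map hnu)
  rwa [card_map, card_univ, Fintype.card_fin, ← Set.ncard_coe_finset,
    SimpleGraph.coe_edgeFinset] at this
end

section
/- For every n ≥ 2, the maximum number of edges in a graph on n vertices containing no Hamiltonian path equals C(n−1, 2). -/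
/-!
The extremal graph is `K_{n-1}` plus an isolated vertex. Conversely, a graph with no Hamiltonian
path violates Ore's condition for paths, so it has non-adjacent `u ≠ v` with
`deg u + deg v ≤ n - 2`; the edges at `u` or `v` plus those among the other `n - 2` vertices number
at most `(n - 2) + C(n-2, 2) = C(n-1, 2)`.

Ore's condition (`deg u + deg v ≥ n - 1` for non-adjacent `u ≠ v`) gives a Hamiltonian path by the
longest path argument: the neighbours of the ends `a`, `b` of a longest path `l` lie on it, so if
`l` misses a vertex the degree sum forces `a ~ b` or a crossover `a ~ l[i+1]`, `b ~ l[i]`, and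
either closes `l` into a cycle on the same vertices. Counting degrees once more, the missed vertex
has a neighbour on that cycle, and opening the cycle there yields a longer path.
-/

open Finset

namespace List
variable {α : Type*}

theorem exists_getElem_succ_mem_getElem_mem [DecidableEq α] {l : List α} {A B : Finset α}
    (hA : A ⊆ l.tail.toFinset) (hB : B ⊆ l.dropLast.toFinset) (hAB : l.length - 1 < #A + #B) :
    ∃ i, ∃ hi : i + 1 < l.length, l[i + 1] ∈ A ∧ l[i] ∈ B := by
  let I := univ.filter fun i : Fin (l.length - 1) => l[i.1 + 1] ∈ A
  let J := univ.filter fun i : Fin (l.length - 1) => l[i.1] ∈ B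
  have hI : #A ≤ #I := by
    refine card_le_card_of_surjOn (fun i : Fin (l.length - 1) => l[i.1 + 1]) fun y hy => ?_
    obtain ⟨j, hj, rfl⟩ := List.mem_iff_getElem.1 (List.mem_toFinset.1 (hA hy))
    exact ⟨⟨j, by simpa using hj⟩, by simpa [I] using hy, by simp⟩
  have hJ : #B ≤ #J := by
    refine card_le_card_of_surjOn (fun i : Fin (l.length - 1) => l[i.1]) fun y hy => ?_
    obtain ⟨j, hj, rfl⟩ := List.mem_iff_getElem.1 (List.mem_toFinset.1 (hB hy))
    exact ⟨⟨j, by simpa using hj⟩, by simpa [J] using hy, by simp⟩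
  obtain ⟨i, hi⟩ := inter_nonempty_of_card_lt_card_add_card (s := univ) (t := I) (u := J)
    (subset_univ _) (subset_univ _) (by rw [card_univ, Fintype.card_fin]; omega)
  simp only [I, J, mem_inter, mem_filter_univ] at hi
  exact ⟨i, by have := i.2; omega, hi⟩

theorem cycleChain_take_append_reverse_drop {R : α → α → Prop} [Std.Symm R]
    {l : List α} (hl : l.IsChain R) {i : ℕ} (hi : i + 1 < l.length)
    (hfirst : R l[0] l[i + 1]) (hlast : R l[i] (l.getLast (ne_nil_of_length_pos (by omega)))) :
    Cycle.Chain R (l.take (i + 1) ++ (l.drop (i + 1)).reverse : List α) := by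
  rw [Cycle.chain_ne_nil _ (by simp; omega), getLast_append_of_ne_nil _ (by simp; omega),
    getLast_reverse, head_drop, ← cons_append, isChain_append, isChain_reverse]
  refine ⟨?_, hl.drop _ |>.imp fun _ _ h => Std.Symm.symm _ _ h, ?_⟩
  · refine isChain_cons.2 ⟨?_, hl.take _⟩
    simpa [head?_eq_getElem?, getElem?_eq_getElem (by omega : 0 < l.length)]
      using Std.Symm.symm _ _ hfirst
  · have : (l[i + 1] :: take (i + 1) l).getLast? = some l[i] := by
      simp [getLast?_cons, getLast?_take, getElem?_eq_getElem (by omega : i < l.length)]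
    simp only [this, head?_reverse, getLast?_drop, Option.mem_def, Option.some.injEq]
    rintro _ rfl _ hy
    rw [if_neg (by omega), getLast?_eq_some_getLast (ne_nil_of_length_pos (by omega)),
      Option.some.injEq] at hy
    exact hy ▸ hlast

theorem _root_.Cycle.Chain.exists_perm_isChain_cons {R : α → α → Prop} {l : List α}
    (h : Cycle.Chain R (l : Cycle α)) {x : α} (hx : x ∈ l) :
    ∃ t, (x :: t).Perm l ∧ (x :: t).IsChain R := by
  obtain ⟨s, u, rfl⟩ := List.append_of_mem hx
  have hrot : (s ++ x :: u) ~r (x :: (u ++ s)) := by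
    simpa using List.isRotated_append (l := s) (l' := x :: u)
  rw [Cycle.coe_eq_coe.2 hrot, Cycle.chain_coe_cons, ← List.cons_append] at h
  exact ⟨u ++ s, hrot.perm.symm, (List.isChain_append.1 h).1⟩

end List

namespace SimpleGraph
variable {V : Type*} (G : SimpleGraph V)

/-- Paths are recorded by their vertex lists, so that reversing, rotating and splicing them are
list operations. -/
structure IsLongestPathList (l : List V) : Prop where
  isChain : l.IsChain G.Adj
  nodup : l.Nodup
  length_le : ∀ l' : List V, l'.IsChain G.Adj → l'.Nodup → l'.length ≤ l.length

theorem exists_isLongestPathList [Fintype V] : ∃ l, G.IsLongestPathList l := by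
  let S := {k | ∃ l : List V, l.IsChain G.Adj ∧ l.Nodup ∧ l.length = k}
  have hS : BddAbove S := ⟨Fintype.card V, by rintro _ ⟨l, -, hl, rfl⟩; exact hl.length_le_card⟩
  obtain ⟨l, hc, hn, hlen⟩ := Nat.sSup_mem (s := S) ⟨0, [], .nil, .nil, rfl⟩ hS
  exact ⟨l, hc, hn, fun l' hc' hn' => hlen ▸ le_csSup hS ⟨l', hc', hn', rfl⟩⟩

namespace IsLongestPathList
variable {G} {l : List V} (hl : G.IsLongestPathList l)
include hl

theorem mem_of_isChain_cons {x : V} (hx : (x :: l).IsChain G.Adj) : x ∈ l := by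
  by_contra hxl
  have := hl.length_le _ hx (List.nodup_cons.2 ⟨hxl, hl.nodup⟩)
  simp at this

theorem of_perm {l' : List V} (hp : l'.Perm l) (hc : l'.IsChain G.Adj) :
    G.IsLongestPathList l' :=
  ⟨hc, hp.nodup_iff.2 hl.nodup, fun l'' hc' hn' => hp.length_eq ▸ hl.length_le l'' hc' hn'⟩

theorem reverse : G.IsLongestPathList l.reverse :=
  ⟨List.isChain_reverse.2 (hl.isChain.imp fun _ _ h => h.symm), List.nodup_reverse.2 hl.nodup,
    fun l' hc hn => (List.length_reverse (as := l)).symm ▸ hl.length_le l' hc hn⟩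

theorem mem_of_adj_head (hne : l ≠ []) {x : V} (hx : G.Adj x (l.head hne)) : x ∈ l := by
  refine hl.mem_of_isChain_cons (List.isChain_cons.2 ⟨?_, hl.isChain⟩)
  simpa [List.head?_eq_some_head hne] using hx

theorem mem_of_adj_getLast (hne : l ≠ []) {x : V} (hx : G.Adj x (l.getLast hne)) : x ∈ l := by
  simpa using hl.reverse.mem_of_adj_head (by simpa using hne) (by simpa using hx)

variable [Fintype V] [DecidableEq V] [DecidableRel G.Adj]

theorem degree_head_lt (hne : l ≠ []) : G.degree (l.head hne) < l.length := by
  rw [← card_neighborFinset_eq_degree, ← List.toFinset_card_of_nodup hl.nodup]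
  refine card_lt_card ⟨fun y hy => ?_, fun h => ?_⟩
  · exact List.mem_toFinset.2 (hl.mem_of_adj_head hne ((mem_neighborFinset _ _ _).1 hy).symm)
  · exact G.irrefl ((mem_neighborFinset _ _ _).1 (h (List.mem_toFinset.2 (List.head_mem hne))))

variable (hore : ∀ u v, u ≠ v → ¬G.Adj u v → Fintype.card V ≤ G.degree u + G.degree v + 1)
include hore

theorem exists_perm_cycleChain (h2 : 2 ≤ l.length) (hlt : l.length < Fintype.card V) :
    ∃ c : List V, c.Perm l ∧ Cycle.Chain G.Adj (c : Cycle V) := by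
  have hne : l ≠ [] := List.ne_nil_of_length_pos (by omega)
  by_cases hba : G.Adj (l.getLast hne) (l.head hne)
  · refine ⟨l, .refl l, (Cycle.chain_ne_nil _ hne).2 (List.isChain_cons.2 ⟨?_, hl.isChain⟩)⟩
    simpa [List.head?_eq_some_head hne] using hba
  have hab : l.head hne ≠ l.getLast hne := by
    rw [Ne, List.head_eq_getElem, List.getLast_eq_getElem, hl.nodup.getElem_inj_iff]
    omega
  have hdeg := hore _ _ hab fun h => hba h.symm
  have hA : G.neighborFinset (l.head hne) ⊆ l.tail.toFinset := fun y hy => by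
    have hadj := (G.mem_neighborFinset _ _).1 hy
    have hyl := hl.mem_of_adj_head hne hadj.symm
    rw [← List.cons_head_tail hne, List.mem_cons] at hyl
    exact List.mem_toFinset.2 (hyl.resolve_left hadj.ne')
  have hB : G.neighborFinset (l.getLast hne) ⊆ l.dropLast.toFinset := fun y hy => by
    have hadj := (G.mem_neighborFinset _ _).1 hy
    have hyl := hl.mem_of_adj_getLast hne hadj.symm
    rw [← List.dropLast_append_getLast hne, List.mem_append, List.mem_singleton] at hyl
    exact List.mem_toFinset.2 (hyl.resolve_right hadj.ne')
  obtain ⟨i, hi, ha, hb⟩ := List.exists_getElem_succ_mem_getElem_mem hA hB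
    (by simp only [card_neighborFinset_eq_degree]; omega)
  have := G.symm
  refine ⟨_, ?_, List.cycleChain_take_append_reverse_drop hl.isChain hi ?_ ?_⟩
  · simpa using (List.reverse_perm (l.drop (i + 1))).append_left (l.take (i + 1))
  · simpa [List.head_eq_getElem] using (G.mem_neighborFinset _ _).1 ha
  · exact ((G.mem_neighborFinset _ _).1 hb).symm

theorem exists_perm_isChain_cons (hlt : l.length < Fintype.card V) {x : V} (hx : x ∈ l) :
    ∃ t, (x :: t).Perm l ∧ (x :: t).IsChain G.Adj := by
  by_cases h1 : l.length ≤ 1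
  · obtain ⟨y, rfl⟩ := List.length_eq_one_iff.1 (le_antisymm h1 (List.length_pos_of_mem hx))
    exact ⟨[], by simp_all, .singleton x⟩
  obtain ⟨c, hc, hcycle⟩ := hl.exists_perm_cycleChain hore (by omega) hlt
  obtain ⟨t, ht, hchain⟩ := hcycle.exists_perm_isChain_cons (hc.mem_iff.2 hx)
  exact ⟨t, ht.trans hc, hchain⟩

theorem mem (v : V) : v ∈ l := by
  by_contra hv
  have hne : l ≠ [] := fun h => hv (hl.mem_of_isChain_cons (h ▸ .singleton v))
  have hcard : #(insert v l.toFinset) = l.length + 1 := by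
    rw [card_insert_of_notMem (by simpa), List.toFinset_card_of_nodup hl.nodup]
  have hlt := hcard ▸ (insert v l.toFinset).card_le_univ
  obtain ⟨x, hx, hvx⟩ : ∃ x ∈ l, G.Adj v x := by
    by_contra! hnone
    have hdeg_v : G.degree v ≤ #(insert v l.toFinset)ᶜ := by
      rw [← card_neighborFinset_eq_degree]
      refine card_le_card fun y hy => ?_
      have hadj := (G.mem_neighborFinset _ _).1 hy
      simpa [not_or] using ⟨hadj.ne', fun hyl => hnone y hyl hadj⟩
    rw [card_compl, hcard] at hdeg_v
    have := hore v (l.head hne) (fun h => hv (h ▸ List.head_mem hne))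
      (fun h => hv (hl.mem_of_adj_head hne h))
    have := hl.degree_head_lt hne
    omega
  obtain ⟨t, ht, hchain⟩ := hl.exists_perm_isChain_cons hore (by omega) hx
  exact hv (ht.mem_iff.1 ((hl.of_perm ht hchain).mem_of_isChain_cons
    (List.isChain_cons_cons.2 ⟨hvx, hchain⟩)))

end IsLongestPathList

theorem exists_isHamiltonian_of_le_degree_add_degree [Fintype V] [DecidableEq V]
    [DecidableRel G.Adj] [Nonempty V]
    (hore : ∀ u v, u ≠ v → ¬G.Adj u v → Fintype.card V ≤ G.degree u + G.degree v + 1) :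
    ∃ (a b : V) (p : G.Walk a b), p.IsHamiltonian := by
  obtain ⟨l, hl⟩ := G.exists_isLongestPathList
  have hne : l ≠ [] := List.ne_nil_of_mem (hl.mem hore (Classical.arbitrary V))
  refine ⟨_, _, Walk.ofSupport l hne hl.isChain, ?_⟩
  exact (Walk.IsPath.mk' (by simpa using hl.nodup)).isHamiltonian_of_mem
    fun v => by simpa using hl.mem hore v

theorem not_exists_isHamiltonian_of_forall_not_adj [DecidableEq V] [Nontrivial V] {v : V}
    (hv : ∀ w, ¬G.Adj v w) : ¬∃ (a b : V) (p : G.Walk a b), p.IsHamiltonian := by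
  rintro ⟨a, b, p, hp⟩
  obtain ⟨w, hw⟩ := exists_ne v
  have hreach : G.Reachable v w :=
    (p.takeUntil v (hp.mem_support v)).reachable.symm.trans
      (p.takeUntil w (hp.mem_support w)).reachable
  obtain ⟨u, hu⟩ := hreach.nonempty_neighborSet_left hw.symm
  exact hv u hu

abbrev completeGraphOn (s : Finset V) : SimpleGraph V :=
  (⊤ : SimpleGraph s).map (Function.Embedding.subtype _)

theorem completeGraphOn_adj {s : Finset V} {x y : V} :
    (completeGraphOn s).Adj x y ↔ x ≠ y ∧ x ∈ s ∧ y ∈ s := by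
  simp [completeGraphOn, map_adj']
  tauto

section EdgeCount
variable [Fintype V] [DecidableEq V]

theorem card_edgeFinset_completeGraphOn (s : Finset V) :
    #(completeGraphOn s).edgeFinset = (#s).choose 2 := by
  rw [card_edgeFinset_map, card_edgeFinset_top_eq_card_choose_two,
    Fintype.card_coe]

variable [DecidableRel G.Adj]

theorem card_edgeFinset_le_choose_add_sum_degree (s : Finset V) :
    #G.edgeFinset ≤ (#s).choose 2 + ∑ v ∈ sᶜ, G.degree v := by
  have hsub : G.edgeFinset ⊆
      (completeGraphOn s).edgeFinset ∪ sᶜ.biUnion fun v => G.incidenceFinset v := by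
    intro e he
    induction e using Sym2.ind with | _ x y => ?_
    have hadj : G.Adj x y := by simpa using he
    by_cases hxy : x ∈ s ∧ y ∈ s
    · exact mem_union_left _ (mem_edgeFinset.2 (completeGraphOn_adj.2 ⟨hadj.ne, hxy⟩))
    refine mem_union_right _ (mem_biUnion.2 ?_)
    rcases not_and_or.1 hxy with hx | hy
    · exact ⟨x, mem_compl.2 hx, (G.mem_incidenceFinset _ _).2 ⟨hadj, Sym2.mem_mk_left x y⟩⟩
    · exact ⟨y, mem_compl.2 hy, (G.mem_incidenceFinset _ _).2 ⟨hadj, Sym2.mem_mk_right x y⟩⟩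
  calc #G.edgeFinset
      ≤ #(completeGraphOn s).edgeFinset + #(sᶜ.biUnion fun v => G.incidenceFinset v) :=
        (card_le_card hsub).trans (card_union_le _ _)
    _ ≤ (#s).choose 2 + ∑ v ∈ sᶜ, G.degree v := by
      rw [card_edgeFinset_completeGraphOn]
      gcongr
      exact card_biUnion_le.trans (by simp [card_incidenceFinset_eq_degree])

theorem card_edgeFinset_le_of_not_exists_isHamiltonian [Nonempty V]
    (h : ¬∃ (a b : V) (p : G.Walk a b), p.IsHamiltonian) :
    #G.edgeFinset ≤ (Fintype.card V - 1).choose 2 := by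
  obtain ⟨u, v, huv, hadj, hdeg⟩ : ∃ u v, u ≠ v ∧ ¬G.Adj u v ∧
      G.degree u + G.degree v + 2 ≤ Fintype.card V := by
    by_contra! hore
    exact h (G.exists_isHamiltonian_of_le_degree_add_degree fun u v huv hadj => by
      have := hore u v huv hadj; omega)
  have hcard : #({u, v}ᶜ : Finset V) = Fintype.card V - 2 := by
    rw [card_compl, card_pair huv]
  have := G.card_edgeFinset_le_choose_add_sum_degree {u, v}ᶜ
  rw [compl_compl, sum_pair huv, hcard] at this
  have hpascal : (Fintype.card V - 1).choose 2 =
      (Fintype.card V - 2).choose 2 + (Fintype.card V - 2) := by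
    rw [show Fintype.card V - 1 = Fintype.card V - 2 + 1 by omega, Nat.choose_succ_succ',
      Nat.choose_one_right, add_comm]
  omega

end EdgeCount
end SimpleGraph

theorem stmt_9 (n : ℕ) (hn : 2 ≤ n) :
    IsGreatest
      {m : ℕ | ∃ G : SimpleGraph (Fin n),
        (¬ ∃ (a b : Fin n) (p : G.Walk a b), p.IsHamiltonian) ∧ G.edgeSet.ncard = m}
      (Nat.choose (n - 1) 2) := by
  have : Nontrivial (Fin n) := Fin.nontrivial_iff_two_le.2 hn
  let v₀ : Fin n := ⟨0, by omega⟩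
  refine ⟨⟨SimpleGraph.completeGraphOn (univ.erase v₀), ?_, ?_⟩, ?_⟩
  · exact SimpleGraph.not_exists_isHamiltonian_of_forall_not_adj _ (v := v₀) fun _ h => by
      simpa using (SimpleGraph.completeGraphOn_adj.1 h).2.1
  · rw [← SimpleGraph.coe_edgeFinset, Set.ncard_coe_finset,
      SimpleGraph.card_edgeFinset_completeGraphOn,
      card_erase_of_mem (mem_univ _), card_univ, Fintype.card_fin]
  · rintro m ⟨G, hG, rfl⟩
    classical
    rw [← SimpleGraph.coe_edgeFinset, Set.ncard_coe_finset]
    simpa using G.card_edgeFinset_le_of_not_exists_isHamiltonian hG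
end

section
/- Let G be a graph on n vertices and let u, v be two nonadjacent vertices of G with d_G(u) + d_G(v) ≥ 2k+1. If the graph G + uv obtained by adding the edge uv has a matching of size k+1, then G has a matching of size k+1. -/
/-!
If the matching avoids `uv` it already lives in `G`. Otherwise deleting `uv` leaves a matching `N`
of `G` with `k` edges that misses `u` and `v`. If a neighbour of `u` or `v` is unmatched, add that
edge to `N`. If some edge `xy` of `N` has `u ~ x` and `v ~ y`, replace it by `ux` and `vy`. In the
remaining case the neighbours of `u` and the `N`-partners of the neighbours of `v` are disjoint
subsets of `V(N)`, so `d(u) + d(v) ≤ |V(N)| = 2k`, a contradiction.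

Matchings are measured by their vertex sets (twice the number of edges), which behave better than
edge sets under these local modifications.
-/

theorem Set.ncard_insert_insert_of_notMem {α : Type*} {s : Set α} {a b : α} (hab : a ≠ b)
    (ha : a ∉ s) (hb : b ∉ s) (hs : s.Finite := by toFinite_tac) :
    (insert a (insert b s)).ncard = s.ncard + 2 := by
  rw [Set.ncard_insert_of_notMem (by simp [hab, ha]) (hs.insert b),
    Set.ncard_insert_of_notMem hb hs]

namespace SimpleGraph

variable {V : Type*} {G : SimpleGraph V} {u v : V}

namespace Subgraph

variable {M : G.Subgraph} {a b x y : V}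

theorem IsMatching.ncard_verts [Finite V] (hM : M.IsMatching) :
    M.verts.ncard = 2 * M.edgeSet.ncard := by
  classical
  have : Fintype M.edgeSet := Fintype.ofFinite _
  have hfiber : ∀ e : M.edgeSet, Nat.card {x // hM.toEdge x = e} = 2 := by
    rintro ⟨e, he⟩
    induction e using Sym2.ind with | _ a b => ?_
    change Nat.card (hM.toEdge ⁻¹' {⟨s(a, b), he⟩}) = 2
    rw [hM.toEdge_preimage_singleton he, Nat.card_coe_set_eq, Set.ncard_pair]
    exact fun h => (M.adj_sub he).ne (congrArg Subtype.val h)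
  rw [← Nat.card_coe_set_eq, ← Nat.card_coe_set_eq M.edgeSet,
    ← Nat.card_congr (Equiv.sigmaFiberEquiv hM.toEdge), Nat.card_sigma]
  simp [hfiber, Nat.card_eq_fintype_card, mul_comm]

theorem IsMatching.deleteVerts_pair (hM : M.IsMatching) (hxy : M.Adj x y) :
    (M.deleteVerts {x, y}).IsMatching := by
  rintro a ⟨ha, hax⟩
  obtain ⟨b, hab, huniq⟩ := hM ha
  have hb : b ∉ ({x, y} : Set V) := by
    rintro (rfl | rfl)
    · exact hax (.inr (hM.eq_of_adj_left hab.symm hxy))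
    · exact hax (.inl (hM.eq_of_adj_left hab.symm hxy.symm))
  exact ⟨b, deleteVerts_adj.2 ⟨ha, hax, hab.snd_mem, hb, hab⟩,
    fun c hc => huniq c (deleteVerts_adj.1 hc).2.2.2.2⟩

theorem IsMatching.sup_subgraphOfAdj (hM : M.IsMatching) (hab : G.Adj a b)
    (ha : a ∉ M.verts) (hb : b ∉ M.verts) : (M ⊔ G.subgraphOfAdj hab).IsMatching := by
  refine hM.sup (.subgraphOfAdj hab) ?_
  rw [support_subgraphOfAdj, Set.disjoint_right]
  rintro c (rfl | rfl | -) hc <;> exact ‹_ ∉ M.verts› (M.support_subset_verts hc)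

theorem IsMatching.exists_verts_eq_insert_insert_of_adj (hM : M.IsMatching) (hab : G.Adj a b)
    (ha : a ∉ M.verts) (hb : b ∉ M.verts) :
    ∃ M' : G.Subgraph, M'.IsMatching ∧ M'.verts = insert a (insert b M.verts) :=
  ⟨_, hM.sup_subgraphOfAdj hab ha hb, by
    rw [verts_sup, subgraphOfAdj_verts, Set.union_insert, Set.union_singleton]⟩

theorem IsMatching.exists_verts_eq_insert_insert_of_adj_adj (hM : M.IsMatching)
    (hxy : M.Adj x y) (hux : G.Adj u x) (hvy : G.Adj v y) (hu : u ∉ M.verts) (hv : v ∉ M.verts)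
    (huv : u ≠ v) :
    ∃ M' : G.Subgraph, M'.IsMatching ∧ M'.verts = insert u (insert v M.verts) := by
  have hx := hxy.fst_mem
  have hy := hxy.snd_mem
  have hvx : v ≠ x := fun h => hv (h ▸ hx)
  have hyu : y ≠ u := fun h => hu (h ▸ hy)
  have hM₁ := (hM.deleteVerts_pair hxy).sup_subgraphOfAdj hux (by simp [hu]) (by simp)
  have hM₂ := hM₁.sup_subgraphOfAdj hvy (by simp [huv.symm, hv, hvx])
    (by simp [(M.adj_sub hxy).ne.symm, hyu])
  refine ⟨_, hM₂, ?_⟩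
  ext w
  simp only [verts_sup, subgraphOfAdj_verts, deleteVerts_verts, Set.mem_union, Set.mem_sdiff,
    Set.mem_insert_iff, Set.mem_singleton_iff]
  grind

theorem IsMatching.ncard_neighborSet_add_ncard_neighborSet_le [Finite V] (hM : M.IsMatching)
    (hu : G.neighborSet u ⊆ M.verts) (hv : G.neighborSet v ⊆ M.verts)
    (hno : ∀ x y, M.Adj x y → G.Adj u x → ¬ G.Adj v y) :
    (G.neighborSet u).ncard + (G.neighborSet v).ncard ≤ M.verts.ncard := by
  set P := {x | ∃ y, G.Adj v y ∧ M.Adj x y}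
  have hP : (G.neighborSet v).ncard = P.ncard :=
    Set.ncard_congr (fun y hy => (hM (hv hy)).choose)
      (fun y hy => ⟨y, hy, (hM (hv hy)).choose_spec.1.symm⟩)
      (fun y₁ y₂ hy₁ hy₂ h => hM.eq_of_adj_right (hM (hv hy₁)).choose_spec.1
        (h ▸ (hM (hv hy₂)).choose_spec.1))
      (fun x ⟨y, hy, hxy⟩ => ⟨y, hy, (hM (hv hy)).unique (hM (hv hy)).choose_spec.1 hxy.symm⟩)
  have hdisj : Disjoint (G.neighborSet u) P :=
    Set.disjoint_left.2 fun x hux ⟨y, hvy, hxy⟩ => hno x y hxy hux hvy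
  rw [hP, ← Set.ncard_union_eq hdisj]
  exact Set.ncard_le_ncard (Set.union_subset hu fun x ⟨_, _, hxy⟩ => hxy.fst_mem)

theorem IsMatching.exists_ncard_verts_eq_add_two [Finite V] (hM : M.IsMatching)
    (hu : u ∉ M.verts) (hv : v ∉ M.verts) (huv : u ≠ v)
    (hdeg : M.verts.ncard < (G.neighborSet u).ncard + (G.neighborSet v).ncard) :
    ∃ M' : G.Subgraph, M'.IsMatching ∧ M'.verts.ncard = M.verts.ncard + 2 := by
  by_cases hu' : ∃ w, G.Adj u w ∧ w ∉ M.verts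
  · obtain ⟨w, huw, hw⟩ := hu'
    obtain ⟨M', hM', hverts⟩ := hM.exists_verts_eq_insert_insert_of_adj huw hu hw
    exact ⟨M', hM', hverts ▸ Set.ncard_insert_insert_of_notMem huw.ne hu hw⟩
  by_cases hv' : ∃ w, G.Adj v w ∧ w ∉ M.verts
  · obtain ⟨w, hvw, hw⟩ := hv'
    obtain ⟨M', hM', hverts⟩ := hM.exists_verts_eq_insert_insert_of_adj hvw hv hw
    exact ⟨M', hM', hverts ▸ Set.ncard_insert_insert_of_notMem hvw.ne hv hw⟩
  by_cases hxy : ∃ x y, M.Adj x y ∧ G.Adj u x ∧ G.Adj v y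
  · obtain ⟨x, y, hxy, hux, hvy⟩ := hxy
    obtain ⟨M', hM', hverts⟩ := hM.exists_verts_eq_insert_insert_of_adj_adj hxy hux hvy hu hv huv
    exact ⟨M', hM', hverts ▸ Set.ncard_insert_insert_of_notMem huv hu hv⟩
  push Not at hu' hv' hxy
  exact absurd hdeg (not_lt.2 (hM.ncard_neighborSet_add_ncard_neighborSet_le hu' hv' hxy))

theorem IsMatching.exists_of_spanningCoe_le {G' : SimpleGraph V} {M : G'.Subgraph}
    (hM : M.IsMatching) (hle : M.spanningCoe ≤ G) :
    ∃ M' : G.Subgraph, M'.IsMatching ∧ M'.verts = M.verts :=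
  ⟨{ verts := M.verts, Adj := M.Adj, adj_sub := fun h => hle h, edge_vert := M.edge_vert,
     symm := M.symm }, hM, rfl⟩

theorem spanningCoe_le_of_notMem_edgeSet (M : (G ⊔ fromEdgeSet {s(u, v)}).Subgraph)
    (h : s(u, v) ∉ M.edgeSet) : M.spanningCoe ≤ G := by
  intro a b hab
  refine (M.adj_sub hab).resolve_right fun hedge => h ?_
  have he : s(a, b) = s(u, v) := ((fromEdgeSet_adj _).1 hedge).1
  exact (congrArg (· ∈ M.edgeSet) he).mp hab

end Subgraph

end SimpleGraph

theorem stmt_10_general (n k : ℕ) (G : SimpleGraph (Fin n)) (u v : Fin n)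
    (hdeg : 2 * k + 1 ≤ (G.neighborSet u).ncard + (G.neighborSet v).ncard)
    (h : ∃ M : (G ⊔ SimpleGraph.fromEdgeSet {s(u, v)}).Subgraph,
        M.IsMatching ∧ M.edgeSet.ncard = k + 1) :
    ∃ M : G.Subgraph, M.IsMatching ∧ M.edgeSet.ncard = k + 1 := by
  obtain ⟨M, hM, hcard⟩ := h
  have hMverts := hM.ncard_verts
  by_cases huv : s(u, v) ∈ M.edgeSet
  · have hMuv : M.Adj u v := huv
    obtain ⟨N, hN, hNverts : N.verts = M.verts \ {u, v}⟩ :=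
      (hM.deleteVerts_pair hMuv).exists_of_spanningCoe_le
        ((M.deleteVerts {u, v}).spanningCoe_le_of_notMem_edgeSet (by simp))
    have hNcard : N.verts.ncard = 2 * k := by
      rw [hNverts, Set.ncard_sdiff (Set.pair_subset hMuv.fst_mem hMuv.snd_mem),
        Set.ncard_pair hMuv.ne]
      omega
    obtain ⟨M', hM', hM'card⟩ := hN.exists_ncard_verts_eq_add_two
      (by simp [hNverts]) (by simp [hNverts]) hMuv.ne (by omega)
    exact ⟨M', hM', by have := hM'.ncard_verts; omega⟩
  · obtain ⟨M', hM', hverts⟩ := hM.exists_of_spanningCoe_le (M.spanningCoe_le_of_notMem_edgeSet huv)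
    exact ⟨M', hM', by have := hM'.ncard_verts; rw [hverts] at this; omega⟩

theorem stmt_10 (n k : ℕ) (G : SimpleGraph (Fin n)) (u v : Fin n)
    (hne : u ≠ v) (hadj : ¬ G.Adj u v)
    (hdeg : 2 * k + 1 ≤ (G.neighborSet u).ncard + (G.neighborSet v).ncard)
    (h : ∃ M : (G ⊔ SimpleGraph.fromEdgeSet {s(u, v)}).Subgraph,
        M.IsMatching ∧ M.edgeSet.ncard = k + 1) :
    ∃ M : G.Subgraph, M.IsMatching ∧ M.edgeSet.ncard = k + 1 :=
  stmt_10_general n k G u v hdeg h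
end

section
/- Let k ≥ 1 and let G be a graph on n vertices that contains no linear forest with k edges and satisfies d_G(u) + d_G(v) ≤ k−1 for every pair of nonadjacent vertices u, v (i.e., G equals its own k-closure). Then: (i) any two vertices of G of degree at least ⌈k/2⌉ are adjacent, so the set C of such vertices is a clique; (ii) if S is the vertex set of a maximal clique containing C and s = |S|, then s ≤ k and every vertex x ∉ S satisfies d_G(x) ≤ min{ ⌈k/2⌉ − 1, k − s }. -/
/-!
A clique on `k + 1` vertices carries a Hamiltonian path, which is a linear forest with `k`
edges, so every clique of `G` has at most `k` vertices. For a vertex `x` outside a maximal clique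
`S` there is some `y ∈ S` not adjacent to `x`; the closure condition applied to the pair `x, y`,
together with `d(y) ≥ |S| - 1`, gives `d(x) ≤ k - |S|`. Two vertices of degree at least
`⌈k/2⌉` have degree sum at least `k`, so the closure condition forces them to be adjacent.
-/

open SimpleGraph

theorem Set.exists_fin_embedding_of_le_ncard {α : Type*} {s : Set α} {m : ℕ}
    (h : m ≤ s.ncard) : ∃ f : Fin m ↪ α, Set.range f ⊆ s := by
  obtain ⟨t, hts, htm⟩ := Set.exists_subset_card_eq h
  rcases Nat.eq_zero_or_pos m with rfl | hm
  · exact ⟨Function.Embedding.ofIsEmpty, fun _ ⟨i, _⟩ => i.elim0⟩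
  have : Finite t := (Set.finite_of_ncard_pos (htm ▸ hm)).to_subtype
  let e : t ≃ Fin m := Finite.equivFinOfCardEq (by rw [Nat.card_coe_set_eq, htm])
  refine ⟨e.symm.toEmbedding.trans (Function.Embedding.subtype _), ?_⟩
  rintro _ ⟨i, rfl⟩
  exact hts (e.symm i).2

namespace SimpleGraph

variable {V W : Type*} {G : SimpleGraph V}

theorem edgeSet_pathGraph_succ (n : ℕ) :
    (pathGraph (n + 1)).edgeSet = Set.range fun i : Fin n => s(i.castSucc, i.succ) := by
  ext e
  induction e with
  | _ a b =>
    simp only [mem_edgeSet, pathGraph_adj, Set.mem_range, Sym2.eq_iff, Fin.ext_iff,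
      Fin.val_castSucc, Fin.val_succ]
    constructor
    · rintro (h | h)
      · exact ⟨⟨a, by omega⟩, Or.inl ⟨rfl, h⟩⟩
      · exact ⟨⟨b, by omega⟩, Or.inr ⟨rfl, h⟩⟩
    · rintro ⟨i, ⟨ha, hb⟩ | ⟨hb, ha⟩⟩ <;> omega

theorem ncard_edgeSet_pathGraph_succ (n : ℕ) : (pathGraph (n + 1)).edgeSet.ncard = n := by
  rw [edgeSet_pathGraph_succ, Set.ncard_range_of_injective, Nat.card_fin]
  intro i j hij
  simp only [Sym2.eq_iff, Fin.ext_iff, Fin.val_castSucc, Fin.val_succ] at hij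
  ext
  omega

theorem isAcyclic_pathGraph_succ (n : ℕ) : (pathGraph (n + 1)).IsAcyclic :=
  (isTree_iff_connected_and_card.mpr ⟨pathGraph_connected n, by
    rw [Nat.card_coe_set_eq, ncard_edgeSet_pathGraph_succ, Nat.card_fin]⟩).isAcyclic

theorem ncard_neighborSet_pathGraph_le_two {n : ℕ} (v : Fin n) :
    ((pathGraph n).neighborSet v).ncard ≤ 2 := by
  calc ((pathGraph n).neighborSet v).ncard ≤ ({(v : ℕ) - 1, (v : ℕ) + 1} : Set ℕ).ncard := by
        refine Set.ncard_le_ncard_of_injOn Fin.val (fun w hw => ?_) Fin.val_injective.injOn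
          (Set.toFinite _)
        rw [mem_neighborSet, pathGraph_adj] at hw
        simp only [Set.mem_insert_iff, Set.mem_singleton_iff]
        omega
    _ ≤ 2 := (Set.ncard_insert_le _ _).trans (by simp)

theorem mem_range_of_map_adj {f : V ↪ W} {u v : W} (h : (G.map f).Adj u v) :
    u ∈ Set.range f := by
  obtain ⟨a, -, -, rfl, -⟩ := (map_adj f G u v).mp h
  exact ⟨a, rfl⟩

theorem Walk.support_subset_range_of_map {f : V ↪ W} {u v : W} (p : (G.map f).Walk u v)
    (hu : u ∈ Set.range f) : ∀ x ∈ p.support, x ∈ Set.range f := by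
  induction p with
  | nil => simpa using hu
  | cons h p ih =>
    intro x hx
    rcases List.mem_cons.mp hx with rfl | hx
    · exact hu
    · exact ih (mem_range_of_map_adj h.symm) x hx

/-- A cycle of `G.map f` lives in the range of `f`, where `G.map f` is a copy of `G`. -/
theorem IsAcyclic.map (f : V ↪ W) (hG : G.IsAcyclic) : (G.map f).IsAcyclic := by
  intro w c hc
  have hw : w ∈ Set.range f := by
    cases c with
    | nil => exact absurd rfl hc.ne_nil
    | cons h _ => exact mem_range_of_map_adj h
  have hcycle : (c.induce _ (c.support_subset_range_of_map hw)).IsCycle :=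
    Walk.IsCycle.of_map (f := (Embedding.induce _).toHom) (by rwa [Walk.map_induce])
  exact (Embedding.map f G).isoInduceRange.isAcyclic_iff.mp hG _ hcycle

theorem IsClique.ncard_sub_one_le_ncard_neighborSet [Finite V] {S : Set V} (hS : G.IsClique S)
    {y : V} (hy : y ∈ S) : S.ncard - 1 ≤ (G.neighborSet y).ncard := by
  rw [← Set.ncard_sdiff_singleton_of_mem hy]
  refine Set.ncard_le_ncard (fun z hz => ?_) (Set.toFinite _)
  exact hS hy hz.1 (Ne.symm hz.2)

theorem exists_not_adj_of_forall_isClique_eq {S : Set V}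
    (hmax : ∀ T : Set V, G.IsClique T → S ⊆ T → T = S) (hS : G.IsClique S) {x : V}
    (hx : x ∉ S) : ∃ y ∈ S, ¬ G.Adj x y := by
  by_contra! hadj
  have := hmax _ (hS.insert fun y hy _ => hadj y hy) (Set.subset_insert x S)
  exact hx (this ▸ Set.mem_insert x S)

end SimpleGraph

theorem isLinearForest_pathGraph_succ (n : ℕ) : IsLinearForest (pathGraph (n + 1)) :=
  ⟨isAcyclic_pathGraph_succ n, ncard_neighborSet_pathGraph_le_two⟩

theorem IsLinearForest.map {V W : Type*} {F : SimpleGraph V} (f : V ↪ W)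
    (hF : IsLinearForest F) : IsLinearForest (F.map f) := by
  refine ⟨hF.1.map f, fun w => ?_⟩
  by_cases hw : w ∈ Set.range f
  · obtain ⟨v, rfl⟩ := hw
    rw [neighborSet_map, Set.ncard_image_of_injective _ f.injective]
    exact hF.2 v
  · have : (F.map f).neighborSet w = ∅ :=
      Set.eq_empty_of_forall_notMem fun u hu => hw (mem_range_of_map_adj hu)
    simp [this]

theorem SimpleGraph.IsClique.exists_isLinearForest {V : Type*} {G : SimpleGraph V} {S : Set V}
    (hS : G.IsClique S) {k : ℕ} (hk : k + 1 ≤ S.ncard) :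
    ∃ F : SimpleGraph V, F ≤ G ∧ IsLinearForest F ∧ F.edgeSet.ncard = k := by
  obtain ⟨f, hf⟩ := Set.exists_fin_embedding_of_le_ncard hk
  refine ⟨(pathGraph (k + 1)).map f, ?_, (isLinearForest_pathGraph_succ k).map f, ?_⟩
  · rw [map_le_iff_le_comap]
    intro i j hij
    exact hS (hf ⟨i, rfl⟩) (hf ⟨j, rfl⟩) (f.injective.ne hij.ne)
  · rw [edgeSet_map, Set.ncard_image_of_injective _ f.sym2Map.injective,
      ncard_edgeSet_pathGraph_succ]

theorem stmt_13 (n k : ℕ) (hk : 1 ≤ k) (G : SimpleGraph (Fin n))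
    (hfree : ¬ ∃ F : SimpleGraph (Fin n), F ≤ G ∧ IsLinearForest F ∧ F.edgeSet.ncard = k)
    (hclosed : ∀ u v : Fin n, u ≠ v → ¬ G.Adj u v →
      (G.neighborSet u).ncard + (G.neighborSet v).ncard ≤ k - 1) :
    (∀ u v : Fin n, u ≠ v → (k + 1) / 2 ≤ (G.neighborSet u).ncard →
        (k + 1) / 2 ≤ (G.neighborSet v).ncard → G.Adj u v) ∧
    G.IsClique {v : Fin n | (k + 1) / 2 ≤ (G.neighborSet v).ncard} ∧
    (∀ S : Set (Fin n), G.IsClique S →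
      (∀ T : Set (Fin n), G.IsClique T → S ⊆ T → T = S) →
      {v : Fin n | (k + 1) / 2 ≤ (G.neighborSet v).ncard} ⊆ S →
      S.ncard ≤ k ∧
        ∀ x : Fin n, x ∉ S →
          (G.neighborSet x).ncard ≤ min ((k + 1) / 2 - 1) (k - S.ncard)) := by
  have high_adj : ∀ u v : Fin n, u ≠ v → (k + 1) / 2 ≤ (G.neighborSet u).ncard →
      (k + 1) / 2 ≤ (G.neighborSet v).ncard → G.Adj u v := by
    intro u v huv hu hv
    by_contra hadj
    have := hclosed u v huv hadj
    omega
  refine ⟨high_adj, fun u hu v hv huv => high_adj u v huv hu hv, fun S hS hmax hCS => ?_⟩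
  have hSk : S.ncard ≤ k := by
    by_contra! hlarge
    exact hfree (hS.exists_isLinearForest hlarge)
  refine ⟨hSk, fun x hx => ?_⟩
  obtain ⟨y, hy, hxy⟩ := exists_not_adj_of_forall_isClique_eq hmax hS hx
  have hdy := hS.ncard_sub_one_le_ncard_neighborSet hy
  have hsum := hclosed x y (fun h => hx (h ▸ hy)) hxy
  have hxC : ¬ (k + 1) / 2 ≤ (G.neighborSet x).ncard := fun h => hx (hCS h)
  have hS1 : 1 ≤ S.ncard := (Set.ncard_pos (Set.toFinite S)).mpr ⟨y, hy⟩
  omega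
end

section
/- Let k ≥ 0 and let G be a graph on n vertices with matching number ν(G) ≤ k satisfying d_G(u) + d_G(v) ≤ 2k for every pair of nonadjacent vertices u, v (i.e., G equals its own (2k+1)-closure). Then: (i) any two vertices of G of degree at least k+1 are adjacent, so the set C of such vertices is a clique; (ii) if S is the vertex set of a maximal clique containing C and s = |S|, then s ≤ 2k+1 and every vertex x ∉ S satisfies d_G(x) ≤ min{ k, 2k − s + 1 }. -/
/-!
A clique on `2k + 2` vertices contains `k + 1` disjoint edges, so `ν(G) ≤ k` bounds every clique
by `2k + 1`. A vertex `x` outside a maximal clique `S` misses some `y ∈ S`, whose degree is at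
least `|S| - 1`; the closure condition then gives `d(x) ≤ 2k + 1 - |S|`, and `d(x) ≤ k` because
all vertices of degree `> k` lie in `S`.
-/

namespace SimpleGraph

variable {V : Type*} {G : SimpleGraph V}

theorem IsClique.exists_isMatching_le_encard_edgeSet {s : Set V} (hs : G.IsClique s) (m : ℕ)
    (hm : 2 * m ≤ s.encard) :
    ∃ M : G.Subgraph, M.IsMatching ∧ M.verts ⊆ s ∧ m ≤ M.edgeSet.encard := by
  induction m generalizing s with
  | zero => exact ⟨⊥, fun v hv => hv.elim, by simp, by simp⟩
  | succ m ih =>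
    obtain ⟨a, b, ha, hb, hab⟩ := Set.one_lt_encard_iff.mp <| by
      refine lt_of_lt_of_le ?_ hm
      push_cast
      calc (1 : ℕ∞) < 2 := by norm_num
        _ ≤ 2 * (m + 1) := le_mul_of_one_le_right' le_add_self
    have hsub : {a, b} ⊆ s := Set.pair_subset ha hb
    have hrest : 2 * m ≤ (s \ {a, b}).encard := by
      have := Set.encard_sdiff_add_encard_of_subset hsub
      rw [Set.encard_pair hab] at this
      rw [← this, Nat.cast_succ, mul_add_one] at hm
      exact (ENat.add_le_add_iff_right (by simp)).mp hm
    obtain ⟨M, hM, hMs, hMcard⟩ := ih (hs.subset Set.sdiff_subset) hrest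
    set e := G.subgraphOfAdj (hs ha hb hab)
    have hdisj : Disjoint M.verts e.verts := by
      simpa [e] using Set.disjoint_sdiff_left.mono_left hMs
    have hnot : s(a, b) ∉ M.edgeSet := fun h =>
      Set.disjoint_left.mp hdisj (M.mem_verts_of_mem_edge h (Sym2.mem_mk_left a b)) (by simp [e])
    refine ⟨M ⊔ e, hM.sup (.subgraphOfAdj _) ?_, ?_, ?_⟩
    · exact hdisj.mono M.support_subset_verts e.support_subset_verts
    · exact Set.union_subset (hMs.trans Set.sdiff_subset) (by simpa [e] using hsub)
    · rw [Subgraph.edgeSet_sup, edgeSet_subgraphOfAdj, Set.union_singleton,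
        Set.encard_insert_of_notMem hnot]
      push_cast
      gcongr

theorem exists_not_adj_of_maximal_isClique {S : Set V} (hS : Maximal G.IsClique S) {x : V}
    (hx : x ∉ S) : ∃ y ∈ S, ¬ G.Adj x y := by
  by_contra! h
  exact hx (hS.mem_of_prop_insert (hS.prop.insert fun b hb _ => h b hb))

variable [Finite V]

theorem IsClique.ncard_le_ncard_neighborSet_add_one {S : Set V} (hS : G.IsClique S) {y : V}
    (hy : y ∈ S) : S.ncard ≤ (G.neighborSet y).ncard + 1 := by
  have hsub : S ⊆ Insert.insert y (G.neighborSet y) := fun z hz =>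
    (eq_or_ne z y).imp id fun hzy => hS hy hz hzy.symm
  exact (Set.ncard_le_ncard hsub).trans (Set.ncard_insert_le _ _)

theorem IsClique.ncard_le_two_mul_add_one {k : ℕ}
    (hnu : ∀ M : G.Subgraph, M.IsMatching → M.edgeSet.ncard ≤ k) {S : Set V}
    (hS : G.IsClique S) : S.ncard ≤ 2 * k + 1 := by
  by_contra! hS_large
  obtain ⟨M, hM, -, hM_large⟩ := hS.exists_isMatching_le_encard_edgeSet (k + 1) <| by
    rw [← S.toFinite.cast_ncard_eq]
    exact_mod_cast (by omega : 2 * (k + 1) ≤ S.ncard)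
  rw [← M.edgeSet.toFinite.cast_ncard_eq] at hM_large
  have hM_small := hnu M hM
  norm_cast at hM_large
  omega

end SimpleGraph

open SimpleGraph

theorem stmt_14 (n k : ℕ) (G : SimpleGraph (Fin n))
    (hnu : ∀ M : G.Subgraph, M.IsMatching → M.edgeSet.ncard ≤ k)
    (hclosed : ∀ u v : Fin n, u ≠ v → ¬ G.Adj u v →
      (G.neighborSet u).ncard + (G.neighborSet v).ncard ≤ 2 * k) :
    (∀ u v : Fin n, u ≠ v → k + 1 ≤ (G.neighborSet u).ncard →
        k + 1 ≤ (G.neighborSet v).ncard → G.Adj u v) ∧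
    G.IsClique {v : Fin n | k + 1 ≤ (G.neighborSet v).ncard} ∧
    (∀ S : Set (Fin n), G.IsClique S →
      (∀ T : Set (Fin n), G.IsClique T → S ⊆ T → T = S) →
      {v : Fin n | k + 1 ≤ (G.neighborSet v).ncard} ⊆ S →
      S.ncard ≤ 2 * k + 1 ∧
        ∀ x : Fin n, x ∉ S →
          (G.neighborSet x).ncard ≤ min k (2 * k + 1 - S.ncard)) := by
  have high_adj : ∀ u v : Fin n, u ≠ v → k + 1 ≤ (G.neighborSet u).ncard →
      k + 1 ≤ (G.neighborSet v).ncard → G.Adj u v := fun u v huv hu hv =>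
    by_contra fun hnadj => by have := hclosed u v huv hnadj; omega
  refine ⟨high_adj, fun u hu v hv huv => high_adj u v huv hu hv, fun S hS hmax hhigh => ?_⟩
  refine ⟨hS.ncard_le_two_mul_add_one hnu, fun x hx => ?_⟩
  have hS_max : Maximal G.IsClique S := ⟨hS, fun T hT hST => (hmax T hT hST).le⟩
  obtain ⟨y, hy, hxy⟩ := exists_not_adj_of_maximal_isClique hS_max hx
  have hx_low : (G.neighborSet x).ncard ≤ k := by
    by_contra! h
    exact hx (hhigh h)
  have hdeg_sum := hclosed x y (ne_of_mem_of_not_mem hy hx).symm hxy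
  have hy_deg := hS.ncard_le_ncard_neighborSet_add_one hy
  omega
end
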